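/- arXiv:1110.4863 — 9 statements merged into one kernel-verified Lean document; each statement's English description precedes it below -/
import Mathlib

section
/- Let C be a left- and right-cancellative category, let w : A → A be an endomorphism, and let x, y be morphisms with source A such that x ≫ a = w ≫ x and y ≫ b = w ≫ y for some endomorphisms a, b. If z is a right lcm of x and y in C, then there exists an endomorphism c of the target of z with z ≫ c = w ≫ z; moreover z is a right lcm of x and y among morphisms conjugating w (i.e. every morphism t with x ≼ t and y ≼ t which conjugates w to some endomorphism is left-divisible by z). -/
open CategoryTheory

/-- In a left- and right-cancellative category, the class of morphisms conjugating a fixed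
endomorphism `w` is closed under right lcms: if `x` and `y` conjugate `w` (to `a`, `b`
respectively) and `z` is a right lcm of `x` and `y` in `C`, then `z` conjugates `w` to some
endomorphism `c` of its target, and `z` is a right lcm of `x` and `y` among morphisms
conjugating `w`. -/
theorem conjugating_closed_under_right_lcm
    {C : Type*} [Category C]
    (hl : ∀ {X Y Z : C} (g : X ⟶ Y) (f h : Y ⟶ Z), g ≫ f = g ≫ h → f = h)
    (hr : ∀ {X Y Z : C} (f h : X ⟶ Y) (g : Y ⟶ Z), f ≫ g = h ≫ g → f = h)
    {A X Y Z : C} (w : A ⟶ A) (x : A ⟶ X) (y : A ⟶ Y)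
    (a : X ⟶ X) (b : Y ⟶ Y)
    (hx : x ≫ a = w ≫ x) (hy : y ≫ b = w ≫ y)
    (z : A ⟶ Z)
    (hxz : ∃ u : X ⟶ Z, z = x ≫ u) (hyz : ∃ u : Y ⟶ Z, z = y ≫ u)
    (hlcm : ∀ {T : C} (t : A ⟶ T), (∃ u, t = x ≫ u) → (∃ u, t = y ≫ u) →
      ∃ u, t = z ≫ u) :
    (∃ c : Z ⟶ Z, z ≫ c = w ≫ z) ∧
    (∀ {T : C} (t : A ⟶ T), (∃ u, t = x ≫ u) → (∃ u, t = y ≫ u) →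
      (∃ d : T ⟶ T, t ≫ d = w ≫ t) → ∃ u, t = z ≫ u) := by
  obtain ⟨u, hu⟩ := hxz
  obtain ⟨v, hv⟩ := hyz
  constructor
  · obtain ⟨c, hc⟩ := hlcm (w ≫ z)
      ⟨a ≫ u, by rw [hu, ← Category.assoc, ← hx, Category.assoc]⟩
      ⟨b ≫ v, by rw [hv, ← Category.assoc, ← hy, Category.assoc]⟩
    exact ⟨c, hc.symm⟩
  · intro T t h1 h2 _
    exact hlcm t h1 h2
end

section
/- Let C be a left- and right-cancellative category that is right-Noetherian and admits local right lcms. Then any nonempty family of morphisms of C with the same source has a left gcd, i.e. a common left divisor that is left-divided by every common left divisor of the family. -/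
/-!
All common left divisors of the family left-divide one fixed `f i₀`. By cancellativity, an
infinite chain of proper right multiples among the left divisors of `f i₀` yields an infinite
chain of proper right divisions of `f i₀`, so right-Noetherianity provides a common left
divisor `d` with no proper right multiple that is still a common left divisor. For any common
left divisor `e`, the right lcm of `d` and `e` (which exists because `f i₀` is a common right
multiple) left-divides every `f i`, hence is `d ≫ ε` with `ε` invertible, and so `e` left-divides
`d`.
-/

open CategoryTheory

namespace CategoryTheory

universe v u

variable {C : Type u} [Category.{v} C]

variable (C) in
def IsRightNoetherian : Prop :=
  ¬ ∃ (T : C) (X : ℕ → C) (f : ∀ i, X i ⟶ T) (h : ∀ i, X i ⟶ X (i + 1)),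
    ∀ i, f i = h i ≫ f (i + 1) ∧ ¬ ∃ ε : X i ⟶ X (i + 1), IsIso ε ∧ f i = ε ≫ f (i + 1)

variable (C) in
def HasLocalRightLcms : Prop :=
  ∀ {A X Y : C} (x : A ⟶ X) (y : A ⟶ Y),
    (∃ (T : C) (t : A ⟶ T), (∃ u, t = x ≫ u) ∧ (∃ u, t = y ≫ u)) →
    ∃ (Z : C) (z : A ⟶ Z), (∃ u, z = x ≫ u) ∧ (∃ u, z = y ≫ u) ∧
      ∀ {T : C} (t : A ⟶ T), (∃ u, t = x ≫ u) → (∃ u, t = y ≫ u) → ∃ u, t = z ≫ u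

def IsProperRightMultiple {A : C} (p q : Σ D : C, A ⟶ D) : Prop :=
  (∃ c, q.2 = p.2 ≫ c) ∧ ¬ ∃ ε : p.1 ⟶ q.1, IsIso ε ∧ q.2 = p.2 ≫ ε

theorem wellFounded_isProperRightMultiple_on_leftDivisors
    (hepi : ∀ {X Y : C} (g : X ⟶ Y), Epi g) (hmono : ∀ {X Y : C} (g : X ⟶ Y), Mono g)
    (hC : IsRightNoetherian C) {A T : C} (g : A ⟶ T) :
    WellFounded fun q p : {p : Σ D : C, A ⟶ D // ∃ u, g = p.2 ≫ u} =>
      IsProperRightMultiple p.1 q.1 := by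
  refine wellFounded_iff_isEmpty_descending_chain.mpr ⟨fun ⟨s, hs⟩ => hC ?_⟩
  choose c hc using fun n => (hs n).1
  choose u hu using fun n => (s n).2
  refine ⟨T, fun n => (s n).1.1, u, c, fun n => ⟨?_, ?_⟩⟩
  · apply (hepi (s n).1.2).left_cancellation
    rw [← hu n, ← Category.assoc, ← hc n, ← hu (n + 1)]
  · rintro ⟨ε, hε, hεu⟩
    refine (hs n).2 ⟨ε, hε, (hmono (u (n + 1))).right_cancellation _ _ ?_⟩
    rw [← hu (n + 1), Category.assoc, ← hεu, ← hu n]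

theorem exists_isProperRightMultiple_of_not_leftDvd (hC : HasLocalRightLcms C)
    {ι : Type*} [Nonempty ι] {A : C} {T : ι → C} {f : ∀ i, A ⟶ T i}
    {D E : C} {d : A ⟶ D} {e : A ⟶ E} (hd : ∀ i, ∃ u, f i = d ≫ u)
    (he : ∀ i, ∃ u, f i = e ≫ u) (hed : ¬ ∃ u, d = e ≫ u) :
    ∃ q : Σ Z : C, A ⟶ Z, (∀ i, ∃ u, f i = q.2 ≫ u) ∧ IsProperRightMultiple ⟨D, d⟩ q := by
  obtain ⟨i₀⟩ := ‹Nonempty ι›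
  obtain ⟨Z, z, ⟨c, hc⟩, ⟨v, hv⟩, hlcm⟩ := hC d e ⟨T i₀, f i₀, hd i₀, he i₀⟩
  refine ⟨⟨Z, z⟩, fun i => hlcm (f i) (hd i) (he i), ⟨c, hc⟩, ?_⟩
  rintro ⟨ε, hε, hzε : z = d ≫ ε⟩
  refine hed ⟨v ≫ inv ε, ?_⟩
  rw [← Category.assoc, ← hv, hzε, Category.assoc, IsIso.hom_inv_id, Category.comp_id]

end CategoryTheory

/-- In a left- and right-cancellative category which is right-Noetherian and admits local
right lcms, any nonempty family of morphisms with the same source has a left gcd. -/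
theorem left_gcd_exists_of_rightNoetherian_localRightLcm
    {C : Type*} [Category C]
    (hl : ∀ {X Y Z : C} (g : X ⟶ Y) (f h : Y ⟶ Z), g ≫ f = g ≫ h → f = h)
    (hr : ∀ {X Y Z : C} (f h : X ⟶ Y) (g : Y ⟶ Z), f ≫ g = h ≫ g → f = h)
    -- right-Noetherian: no infinite sequence of proper right divisions
    (noeth : ¬ ∃ (T : C) (X : ℕ → C) (f : ∀ i, X i ⟶ T) (h : ∀ i, X i ⟶ X (i + 1)),
      ∀ i, f i = h i ≫ f (i + 1) ∧
        ¬ ∃ ε : X i ⟶ X (i + 1), IsIso ε ∧ f i = ε ≫ f (i + 1))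
    -- local right lcms
    (loclcm : ∀ {A X Y : C} (x : A ⟶ X) (y : A ⟶ Y),
      (∃ (T : C) (t : A ⟶ T), (∃ u, t = x ≫ u) ∧ (∃ u, t = y ≫ u)) →
      ∃ (Z : C) (z : A ⟶ Z), (∃ u, z = x ≫ u) ∧ (∃ u, z = y ≫ u) ∧
        ∀ {T : C} (t : A ⟶ T), (∃ u, t = x ≫ u) → (∃ u, t = y ≫ u) → ∃ u, t = z ≫ u)
    {ι : Type*} [Nonempty ι] {A : C} (T : ι → C) (f : ∀ i, A ⟶ T i) :
    ∃ (D : C) (d : A ⟶ D), (∀ i, ∃ u, f i = d ≫ u) ∧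
      ∀ {E : C} (e : A ⟶ E), (∀ i, ∃ u, f i = e ≫ u) → ∃ u, d = e ≫ u := by
  obtain ⟨i₀⟩ := ‹Nonempty ι›
  have wf := wellFounded_isProperRightMultiple_on_leftDivisors (fun g => ⟨hl g⟩)
    (fun g => ⟨fun f h => hr f h g⟩) noeth (f i₀)
  obtain ⟨⟨⟨D, d⟩, _⟩, hd, hmax⟩ := wf.has_min {p | ∀ i, ∃ u, f i = p.1.2 ≫ u}
    ⟨⟨⟨A, 𝟙 A⟩, f i₀, (Category.id_comp _).symm⟩, fun i => ⟨f i, (Category.id_comp _).symm⟩⟩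
  refine ⟨D, d, hd, fun e he => by_contra fun hed => ?_⟩
  obtain ⟨q, hq, hdq⟩ := exists_isProperRightMultiple_of_not_leftDvd loclcm hd he hed
  exact hmax ⟨q, hq i₀⟩ hq hdq
end

section
/- Let M be a left- and right-cancellative monoid that is right-Noetherian and admits local right lcms, and let M' be a parabolic submonoid of M (i.e. a submonoid closed under left divisors and under right lcms). Then every u ∈ M has a maximal left divisor in M': there exists α ∈ M' with α left-dividing u such that every element of M' left-dividing u left-divides α. -/
/-- In a cancellative, right-Noetherian monoid admitting local right lcms, every element
has a maximal left divisor in any parabolic submonoid. -/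
theorem parabolic_submonoid_maximal_left_divisor
    {M : Type*} [Monoid M]
    (hlc : ∀ a b c : M, a * b = a * c → b = c)
    (hrc : ∀ a b c : M, b * a = c * a → b = c)
    -- right-Noetherian: no infinite sequence of proper right divisions
    (hnoeth : ¬ ∃ f : ℕ → M, ∀ i, ∃ c : M, ¬ IsUnit c ∧ f i = c * f (i + 1))
    -- local right lcms
    (hlcm : ∀ a b : M, (∃ m : M, (∃ u, m = a * u) ∧ (∃ v, m = b * v)) →
      ∃ l : M, (∃ u, l = a * u) ∧ (∃ v, l = b * v) ∧
        ∀ m : M, (∃ u, m = a * u) → (∃ v, m = b * v) → ∃ w, m = l * w)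
    (M' : Submonoid M)
    -- parabolic: closed under left divisors
    (hdiv : ∀ x ∈ M', ∀ a c : M, x = a * c → a ∈ M')
    -- parabolic: closed under right lcms
    (hlcmcl : ∀ a ∈ M', ∀ b ∈ M', ∀ l : M,
      ((∃ u, l = a * u) ∧ (∃ v, l = b * v) ∧
        ∀ m : M, (∃ u, m = a * u) → (∃ v, m = b * v) → ∃ w, m = l * w) → l ∈ M')
    (u : M) :
    ∃ α ∈ M', (∃ c, u = α * c) ∧ ∀ b ∈ M', (∃ c, u = b * c) → ∃ c, α = b * c := by
  by_contra h
  push_neg at h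
  -- states: pairs (α, c) with α ∈ M' and u = α * c
  have key : ∀ p : {p : M × M // p.1 ∈ M' ∧ u = p.1 * p.2},
      ∃ q : {p : M × M // p.1 ∈ M' ∧ u = p.1 * p.2},
        ∃ d : M, ¬ IsUnit d ∧ p.1.2 = d * q.1.2 := by
    rintro ⟨⟨α, c⟩, hα, hc⟩
    obtain ⟨b, hb, ⟨c', hc'⟩, hnb⟩ := h α hα ⟨c, hc⟩
    obtain ⟨l, ⟨x, hx⟩, ⟨y, hy⟩, hl⟩ := hlcm α b ⟨u, ⟨c, hc⟩, ⟨c', hc'⟩⟩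
    have hlmem : l ∈ M' := hlcmcl α hα b hb l ⟨⟨x, hx⟩, ⟨y, hy⟩, hl⟩
    obtain ⟨w, hw⟩ := hl u ⟨c, hc⟩ ⟨c', hc'⟩
    have hcw : c = x * w := by
      apply hlc α
      rw [← hc, hw, hx, mul_assoc]
    have hxnu : ¬ IsUnit x := by
      intro hxu
      obtain ⟨v, hv⟩ := hxu.exists_right_inv
      exact hnb (y * v) (by rw [← mul_assoc, ← hy, hx, mul_assoc, hv, mul_one])
    exact ⟨⟨(l, w), hlmem, hw⟩, x, hxnu, hcw⟩
  apply hnoeth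
  let f : ℕ → {p : M × M // p.1 ∈ M' ∧ u = p.1 * p.2} :=
    fun n => Nat.rec ⟨(1, u), M'.one_mem, (one_mul u).symm⟩
      (fun _ p => Classical.choose (key p)) n
  refine ⟨fun i => (f i).1.2, fun i => ?_⟩
  obtain ⟨d, hd, heq⟩ := Classical.choose_spec (key (f i))
  exact ⟨d, hd, heq⟩
end

section
/- Let M and I be as in the ribbon-monoid setting. Let b, b' ∈ M both conjugate I into M (for every s ∈ I there are t, t' ∈ M with s·b = b·t and s·b' = b'·t') and suppose both are I-reduced, i.e. α_I(b) = 1 and α_I(b') = 1. If c ∈ M is a right lcm of b and b', then c is I-reduced: α_I(c) = 1. -/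
namespace Ribbon

variable {M : Type*} [Monoid M]

/-- `a` left-divides `b`. -/
def LDvd (a b : M) : Prop := ∃ c, b = a * c

/-- `l` is a right lcm of `a` and `b`: a common right multiple left-dividing every
common right multiple. -/
def IsRightLcm (a b l : M) : Prop :=
  LDvd a l ∧ LDvd b l ∧ ∀ m, LDvd a m → LDvd b m → LDvd l m

/-- An atom: an element `≠ 1` which is not a product of two elements `≠ 1`. -/
def IsAtom' (a : M) : Prop := a ≠ 1 ∧ ∀ b c, a = b * c → b = 1 ∨ c = 1

/-- A parabolic submonoid: one closed under left divisors and under right lcms. -/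
def IsParabolic (N : Submonoid M) : Prop :=
  (∀ x ∈ N, ∀ a : M, LDvd a x → a ∈ N) ∧
  (∀ a ∈ N, ∀ b ∈ N, ∀ l : M, IsRightLcm a b l → l ∈ N)

/-- `α` is the maximal left divisor of `b` lying in the submonoid `N`. -/
def IsHead (N : Submonoid M) (b α : M) : Prop :=
  α ∈ N ∧ LDvd α b ∧ ∀ a ∈ N, LDvd a b → LDvd a α

end Ribbon


private lemma closure_cases' {M : Type*} [Monoid M] (I : Set M) (x : M)
    (hx : x ∈ Submonoid.closure I) : x = 1 ∨ ∃ s ∈ I, ∃ w, x = s * w := by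
  induction hx using Submonoid.closure_induction with
  | mem a ha => exact Or.inr ⟨a, ha, 1, (mul_one a).symm⟩
  | one => exact Or.inl rfl
  | mul a b _ _ iha ihb =>
    rcases iha with h1 | ⟨s, hs, w, hw⟩
    · rcases ihb with h1' | ⟨s, hs, w, hw⟩
      · exact Or.inl (by rw [h1, h1', one_mul])
      · exact Or.inr ⟨s, hs, w, by rw [h1, one_mul, hw]⟩
    · exact Or.inr ⟨s, hs, w * b, by rw [hw, mul_assoc]⟩

/-- In the ribbon-monoid setting, if `b` and `b'` both conjugate `I` into `M` and are both
`I`-reduced (their heads in `M_I` are trivial), then any right lcm of `b` and `b'` is also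
`I`-reduced. -/
theorem ribbon_right_lcm_of_reduced_is_reduced
    {M : Type*} [Monoid M]
    (hlc : ∀ a b c : M, a * b = a * c → b = c)
    (hrc : ∀ a b c : M, b * a = c * a → b = c)
    (hunit : ∀ a : M, IsUnit a → a = 1)
    (hnoeth : ¬ ∃ f : ℕ → M, ∀ i, ∃ c : M, ¬ IsUnit c ∧ f i = c * f (i + 1))
    (hlcm : ∀ a b : M, (∃ m, Ribbon.LDvd a m ∧ Ribbon.LDvd b m) →
      ∃ l, Ribbon.IsRightLcm a b l)
    (hatom : ∀ s f t : M, Ribbon.IsAtom' s → s * f = f * t → Ribbon.IsAtom' t)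
    (I : Set M) (hI : ∀ s ∈ I, Ribbon.IsAtom' s)
    (hpara : ∀ b : M, (∀ s ∈ I, ∃ t, s * b = b * t) →
      Ribbon.IsParabolic (Submonoid.closure {t : M | ∃ s ∈ I, s * b = b * t}))
    (αI : M → M) (hα : ∀ x : M, Ribbon.IsHead (Submonoid.closure I) x (αI x))
    (b b' c : M)
    (hb : ∀ s ∈ I, ∃ t, s * b = b * t)
    (hb' : ∀ s ∈ I, ∃ t, s * b' = b' * t)
    (hbred : αI b = 1) (hb'red : αI b' = 1)
    (hc : Ribbon.IsRightLcm b b' c) :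
    αI c = 1 := by
  by_contra hne
  obtain ⟨hmem, hdvd, _⟩ := hα c
  obtain ⟨s, hsI, w, hw⟩ := (closure_cases' I _ hmem).resolve_left hne
  have hatomS := hI s hsI
  have hsnotunit : ¬ IsUnit s := fun h => hatomS.1 (hunit s h)
  have hsc : Ribbon.LDvd s c := by
    obtain ⟨u, hu⟩ := hdvd
    exact ⟨w * u, by rw [hu, hw, mul_assoc]⟩
  have key : ∀ B : M, (∀ s' ∈ I, ∃ t, s' * B = B * t) → αI B = 1 → Ribbon.LDvd B c →
      ∃ e, c = s * B * e := by
    intro B hB hBred hBc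
    obtain ⟨t, ht⟩ := hB s hsI
    have htatom := hatom s B t hatomS ht
    obtain ⟨l, hl⟩ := hlcm s B ⟨s * B, ⟨B, rfl⟩, ⟨t, ht⟩⟩
    obtain ⟨u, hu⟩ := hl.2.1
    obtain ⟨z, hz⟩ := hl.2.2 (s * B) ⟨B, rfl⟩ ⟨t, ht⟩
    have htuz : t = u * z := hlc B _ _ (by rw [← mul_assoc, ← hu, ← hz, ht])
    rcases htatom.2 u z htuz with hu1 | hz1
    · exfalso
      have hlB : l = B := by rw [hu, hu1, mul_one]
      have hsB : Ribbon.LDvd s B := hlB ▸ hl.1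
      obtain ⟨v, hv⟩ := (hα B).2.2 s (Submonoid.subset_closure hsI) hsB
      rw [hBred] at hv
      have hvs : v * s = 1 := hlc s _ _ (by rw [← mul_assoc, ← hv, one_mul, mul_one])
      exact hsnotunit ⟨⟨s, v, hv.symm, hvs⟩, rfl⟩
    · have hl' : l = s * B := by rw [hz, hz1, mul_one]
      obtain ⟨e, he⟩ := hl.2.2 c hsc hBc
      exact ⟨e, by rw [he, hl']⟩
  obtain ⟨e, he⟩ := key b hb hbred hc.1
  obtain ⟨e', he'⟩ := key b' hb' hb'red hc.2.1
  obtain ⟨x, hx⟩ := hsc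
  have hxb : x = b * e := hlc s _ _ (by rw [← hx, he, mul_assoc])
  have hxb' : x = b' * e' := hlc s _ _ (by rw [← hx, he', mul_assoc])
  obtain ⟨y, hy⟩ := hc.2.2 x ⟨e, hxb⟩ ⟨e', hxb'⟩
  have hcy : c = s * (c * y) := by rw [← hy, ← hx]
  exact hnoeth ⟨fun i => c * y ^ i, fun i => ⟨s, hsnotunit, by
    calc c * y ^ i = s * (c * y) * y ^ i := by rw [← hcy]
      _ = s * (c * y ^ (i + 1)) := by rw [mul_assoc, mul_assoc, ← pow_succ']⟩⟩
end

section
/- Let C be a left- and right-cancellative category and S a Garside family in C. Then in the conjugacy category Ad C (whose objects are the endomorphisms of C and whose morphisms from w to w' are the morphisms x of C with x ≫ w' = w ≫ x), the set of those morphisms of Ad C whose underlying morphism in C belongs to S is a Garside family in Ad C. -/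
/-!
Every morphism `x` of `C` is a composite `s₁ ≫ ⋯ ≫ sₙ ≫ ε` with `sᵢ ∈ S`, each `sᵢ` greedy with
respect to the rest, and `ε` invertible: such decompositions are closed under composition by the
Garside axioms. If `x : w ⟶ w'` in `Ad C`, then `s₁` left-divides `w ≫ x = x ≫ w'`, so by
greediness `w ≫ s₁ = s₁ ≫ v` for some `v`, and left cancellation makes the remainder a morphism
`v ⟶ w'`; hence the decomposition lifts letter by letter to `Ad C`. The same argument lifts the
greedy decompositions of axiom (c), and factorizations `g ≫ ε` with `ε` invertible lift by
conjugating the target endomorphism by `ε`.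
-/

open CategoryTheory

/-- `f` left-divides `g` (both with source `X`). -/
def LDivides {C : Type*} [Category C] {X Y Z : C} (f : X ⟶ Y) (g : X ⟶ Z) : Prop :=
  ∃ h : Y ⟶ Z, g = f ≫ h

/-- `IsCompositeOf S f` means that `f` is a (possibly empty) composite of morphisms
belonging to the class `S`. -/
inductive IsCompositeOf {C : Type*} [Category C]
    (S : ∀ ⦃X Y : C⦄, (X ⟶ Y) → Prop) : ∀ ⦃X Y : C⦄, (X ⟶ Y) → Prop
  | id (X : C) : IsCompositeOf S (𝟙 X)
  | of {X Y : C} {f : X ⟶ Y} : S f → IsCompositeOf S f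
  | comp {X Y Z : C} {f : X ⟶ Y} {g : Y ⟶ Z} :
      IsCompositeOf S f → IsCompositeOf S g → IsCompositeOf S (f ≫ g)

/-- `S` is a Garside family: `S` together with the invertible morphisms generates `C`;
`Isom C ∘ S ⊆ S ∘ Isom C ∪ Isom C`; and every composite of two non-invertible elements of
`S` is in `S ∘ Isom C` or admits an `S`-normal decomposition of length two. -/
def IsGarsideFamily {C : Type*} [Category C]
    (S : ∀ ⦃X Y : C⦄, (X ⟶ Y) → Prop) : Prop :=
  (∀ {X Y : C} (f : X ⟶ Y),
      IsCompositeOf (fun ⦃X' Y'⦄ (g : X' ⟶ Y') => S g ∨ IsIso g) f) ∧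
  (∀ {X Y Z : C} (ε : X ⟶ Y) (f : Y ⟶ Z), IsIso ε → S f →
      (∃ (W : C) (g : X ⟶ W) (ε' : W ⟶ Z), S g ∧ IsIso ε' ∧ ε ≫ f = g ≫ ε') ∨
        IsIso (ε ≫ f)) ∧
  (∀ {X Y Z : C} (f : X ⟶ Y) (g : Y ⟶ Z), S f → S g → ¬ IsIso f → ¬ IsIso g →
      (∃ (W : C) (h : X ⟶ W) (ε : W ⟶ Z), S h ∧ IsIso ε ∧ f ≫ g = h ≫ ε) ∨
      (∃ (Y₁ : C) (f₁ : X ⟶ Y₁) (g₁ : Y₁ ⟶ Z), f ≫ g = f₁ ≫ g₁ ∧ S f₁ ∧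
        (∃ (W : C) (h : Y₁ ⟶ W) (ε : W ⟶ Z), S h ∧ IsIso ε ∧ g₁ = h ≫ ε) ∧
        ¬ IsIso g₁ ∧
        ∀ {V U : C} (k : V ⟶ X) (h : V ⟶ U), S h →
          LDivides h (k ≫ f₁ ≫ g₁) → LDivides h (k ≫ f₁)))

/-- Objects of the conjugacy category of `C`: endomorphisms of `C`. -/
def AdObj (C : Type*) [Category C] : Type _ := Σ A : C, A ⟶ A

/-- The conjugacy category `Ad C`: objects are endomorphisms `w : A ⟶ A` of `C`, and a
morphism from `w` to `w'` is a morphism `x` of `C` with `x ≫ w' = w ≫ x`. -/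
instance AdObj.category {C : Type*} [Category C] : Category (AdObj C) where
  Hom w w' := {x : w.1 ⟶ w'.1 // x ≫ w'.2 = w.2 ≫ x}
  id w := ⟨𝟙 w.1, by simp⟩
  comp {w w' w''} f g := ⟨f.1 ≫ g.1, by
    rw [Category.assoc, g.2, ← Category.assoc, f.2, Category.assoc]⟩
  id_comp f := Subtype.ext (by simp)
  comp_id f := Subtype.ext (by simp)
  assoc f g h := Subtype.ext (by simp)
namespace Garside

variable {C : Type*} [Category C]

section
variable (S : ∀ ⦃X Y : C⦄, (X ⟶ Y) → Prop)

def Greedy {A M B : C} (s : A ⟶ M) (a : M ⟶ B) : Prop :=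
  ∀ {V U : C} (k : V ⟶ A) (u : V ⟶ U), S u → LDivides u (k ≫ s ≫ a) → LDivides u (k ≫ s)

/-- An `S`-normal decomposition in which invertible letters are allowed. -/
inductive HasNormalDecomp : ∀ ⦃A B : C⦄, (A ⟶ B) → Prop
  | isIso {A B : C} {x : A ⟶ B} : IsIso x → HasNormalDecomp x
  | cons {A M B : C} {s : A ⟶ M} {y : M ⟶ B} :
      S s → Greedy S s y → HasNormalDecomp y → HasNormalDecomp (s ≫ y)

end

variable {S : ∀ ⦃X Y : C⦄, (X ⟶ Y) → Prop}

lemma _root_.LDivides.of_comp_isIso {V U W W' : C} {u : V ⟶ U} {x : V ⟶ W} {ε : W ⟶ W'}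
    [IsIso ε] (h : LDivides u (x ≫ ε)) : LDivides u x := by
  obtain ⟨m, hm⟩ := h
  exact ⟨m ≫ inv ε, by rw [← Category.assoc, ← hm]; simp⟩

lemma greedy_of_isIso {A M B : C} (s : A ⟶ M) (a : M ⟶ B) [IsIso a] : Greedy S s a :=
  fun k _ _ h => LDivides.of_comp_isIso (ε := a) (by rwa [Category.assoc])

lemma Greedy.of_comp_eq_comp {A A' M M' B : C} {s : A ⟶ M} {y : M ⟶ B} (hs : Greedy S s y)
    {e : A' ⟶ A} {g : A' ⟶ M'} {ε : M' ⟶ M} [IsIso ε] (h : e ≫ s = g ≫ ε) :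
    Greedy S g (ε ≫ y) := by
  intro V U k u hu hdiv
  have := hs (k ≫ e) u hu (by simpa [reassoc_of% h] using hdiv)
  exact LDivides.of_comp_isIso (ε := ε) (by simpa [h] using this)

lemma Greedy.of_comp {A M N B : C} {f : A ⟶ M} {g : M ⟶ N} {a : N ⟶ B} (hf : Greedy S f g)
    (hfg : Greedy S (f ≫ g) a) : Greedy S f (g ≫ a) := by
  intro V U k u hu hdiv
  exact hf k u hu (by simpa using hfg k u hu (by simpa using hdiv))

section IsGarsideFamily
variable (hS : IsGarsideFamily S)
include hS

lemma HasNormalDecomp.isIso_comp {M B : C} {y : M ⟶ B} (hy : HasNormalDecomp S y) :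
    ∀ {A : C} (ε : A ⟶ M) [IsIso ε], HasNormalDecomp S (ε ≫ y) := by
  induction hy with
  | isIso h => intro A ε _; exact .isIso inferInstance
  | @cons M N B t z ht hgreedy hz ih =>
    intro A ε _
    rcases hS.2.1 ε t inferInstance ht with ⟨W, t', ε', ht', hε', h⟩ | hiso
    · rw [reassoc_of% h]
      exact .cons ht' (hgreedy.of_comp_eq_comp h) (ih ε')
    · simpa using ih (ε ≫ t)

/-- Axiom (c) applied to `s` and the first letter either absorbs both into one letter, or yields a
greedy head `f₁` followed by a letter to which the recursion applies. -/
lemma HasNormalDecomp.mem_comp_isIso_comp {M B : C} {y : M ⟶ B} (hy : HasNormalDecomp S y) :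
    ∀ {A M₀ : C} {s : A ⟶ M₀} (ε : M₀ ⟶ M) [IsIso ε], S s → HasNormalDecomp S (s ≫ ε ≫ y) := by
  induction hy with
  | isIso h => intro A M₀ s ε _ hs; exact .cons hs (greedy_of_isIso _ _) (.isIso inferInstance)
  | @cons M N B t z ht hgreedy hz ih =>
    intro A M₀ s ε _ hs
    by_cases hsiso : IsIso s
    · simpa using (HasNormalDecomp.cons ht hgreedy hz).isIso_comp hS (s ≫ ε)
    by_cases hεt : IsIso (ε ≫ t)
    · simpa using ih (ε ≫ t) hs
    obtain ⟨W, t', ε', ht', hε', h⟩ := (hS.2.1 ε t inferInstance ht).resolve_right hεt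
    have ht'iso : ¬ IsIso t' := fun _ => hεt (h ▸ inferInstance)
    rcases hS.2.2 s t' hs ht' hsiso ht'iso with
      ⟨W₁, h₁, ε₁, hh₁, hε₁, e⟩ | ⟨Y₁, f₁, g₁, e, hf₁, ⟨W₁, h₁, ε₁, hh₁, hε₁, rfl⟩, -, hq⟩
    · have e' : (s ≫ ε) ≫ t = h₁ ≫ ε₁ ≫ ε' := by rw [Category.assoc, h, reassoc_of% e]
      have key : s ≫ ε ≫ t ≫ z = h₁ ≫ (ε₁ ≫ ε') ≫ z := by simpa using e' =≫ z
      rw [key]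
      exact .cons hh₁ (hgreedy.of_comp_eq_comp e') (hz.isIso_comp hS (ε₁ ≫ ε'))
    · have e' : (s ≫ ε) ≫ t = (f₁ ≫ h₁ ≫ ε₁) ≫ ε' := by simp [h, reassoc_of% e]
      have key : s ≫ ε ≫ t ≫ z = f₁ ≫ (h₁ ≫ ε₁) ≫ ε' ≫ z := by simpa using e' =≫ z
      have hgreedy' : Greedy S f₁ ((h₁ ≫ ε₁) ≫ ε' ≫ z) :=
        Greedy.of_comp (fun k u hu => hq k u hu) (hgreedy.of_comp_eq_comp e')
      have hrest : HasNormalDecomp S ((h₁ ≫ ε₁) ≫ ε' ≫ z) := by simpa using ih (ε₁ ≫ ε') hh₁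
      rw [key]
      exact .cons hf₁ hgreedy' hrest

lemma HasNormalDecomp.comp {A B : C} {f : A ⟶ B} (hf : HasNormalDecomp S f) :
    ∀ {D : C} {g : B ⟶ D}, HasNormalDecomp S g → HasNormalDecomp S (f ≫ g) := by
  induction hf with
  | isIso h => intro D g hg; exact hg.isIso_comp hS _
  | cons hs _ _ ih => intro D g hg; simpa using (ih hg).mem_comp_isIso_comp hS (𝟙 _) hs

lemma _root_.IsGarsideFamily.hasNormalDecomp {A B : C} (x : A ⟶ B) : HasNormalDecomp S x := by
  induction hS.1 x with
  | id X => exact .isIso inferInstance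
  | @of X Y f h =>
    rcases h with hs | hiso
    · simpa using HasNormalDecomp.cons hs (greedy_of_isIso f (𝟙 Y)) (.isIso inferInstance)
    · exact .isIso hiso
  | comp _ _ ihf ihg => exact ihf.comp hS ihg

end IsGarsideFamily

end Garside

namespace AdObj

variable {C : Type*} [Category C] {S : ∀ ⦃X Y : C⦄, (X ⟶ Y) → Prop}

def of (A : C) (w : A ⟶ A) : AdObj C := ⟨A, w⟩

lemma isIso_iff {X Y : AdObj C} (f : X ⟶ Y) : IsIso f ↔ IsIso f.1 := by
  constructor
  · rintro ⟨g, hfg, hgf⟩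
    exact ⟨g.1, congrArg Subtype.val hfg, congrArg Subtype.val hgf⟩
  · intro _
    have hinv : inv f.1 ≫ X.2 = Y.2 ≫ inv f.1 := by
      rw [IsIso.inv_comp_eq, reassoc_of% f.2, IsIso.hom_inv_id, Category.comp_id]
    exact ⟨⟨inv f.1, hinv⟩, Subtype.ext (IsIso.hom_inv_id f.1),
      Subtype.ext (IsIso.inv_hom_id f.1)⟩

lemma exists_mem_comp_isIso {X Z : AdObj C} {f : X ⟶ Z}
    (h : ∃ (W : C) (g : X.1 ⟶ W) (ε : W ⟶ Z.1), S g ∧ IsIso ε ∧ f.1 = g ≫ ε) :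
    ∃ (W : AdObj C) (g : X ⟶ W) (ε : W ⟶ Z), S g.1 ∧ IsIso ε ∧ f = g ≫ ε := by
  obtain ⟨W, g, ε, hg, hε, e⟩ := h
  have hg' : g ≫ ε ≫ Z.2 ≫ inv ε = X.2 ≫ g := by
    rw [← reassoc_of% e, reassoc_of% f.2, e]
    simp
  refine ⟨of W (ε ≫ Z.2 ≫ inv ε), ⟨g, hg'⟩, ⟨ε, by simp [of]⟩, hg, ?_, Subtype.ext e⟩
  exact (isIso_iff _).2 hε

section LeftCancellative
variable (hl : ∀ {X Y Z : C} (g : X ⟶ Y) (f h : Y ⟶ Z), g ≫ f = g ≫ h → f = h)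
include hl

lemma conj_of_comp_eq {A M B : C} {w : A ⟶ A} {v : M ⟶ M} {w' : B ⟶ B} {s : A ⟶ M}
    {y : M ⟶ B} (hs : s ≫ v = w ≫ s) (h : (s ≫ y) ≫ w' = w ≫ s ≫ y) : y ≫ w' = v ≫ y :=
  hl s _ _ (by rw [reassoc_of% hs]; simpa using h)

lemma lDivides_of_lDivides_val {V U Y : AdObj C} {t : V ⟶ U} {x : V ⟶ Y}
    (h : LDivides t.1 x.1) : LDivides t x := by
  obtain ⟨m, hm⟩ := h
  exact ⟨⟨m, conj_of_comp_eq hl t.2 (hm ▸ x.2)⟩, Subtype.ext hm⟩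

lemma greedy_of_val {X Y Z : AdObj C} {s : X ⟶ Y} {y : Y ⟶ Z} (h : Garside.Greedy S s.1 y.1) :
    Garside.Greedy (fun ⦃p q : AdObj C⦄ (f : p ⟶ q) => S f.1) s y := by
  rintro V U k u hu ⟨m, hm⟩
  exact lDivides_of_lDivides_val hl (h k.1 u.1 hu ⟨m.1, congrArg Subtype.val hm⟩)

lemma exists_conj_of_greedy {A M B : C} {w : A ⟶ A} {w' : B ⟶ B} {s : A ⟶ M} {y : M ⟶ B}
    (hs : S s) (hgreedy : Garside.Greedy S s y) (h : (s ≫ y) ≫ w' = w ≫ s ≫ y) :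
    ∃ v : M ⟶ M, s ≫ v = w ≫ s ∧ y ≫ w' = v ≫ y := by
  obtain ⟨v, hv⟩ := hgreedy w s hs ⟨y ≫ w', by simpa using h.symm⟩
  exact ⟨v, hv.symm, conj_of_comp_eq hl hv.symm h⟩

lemma isCompositeOf_of_hasNormalDecomp {A B : C} {x : A ⟶ B}
    (hx : Garside.HasNormalDecomp S x) (w : A ⟶ A) (w' : B ⟶ B) (hconj : x ≫ w' = w ≫ x) :
    IsCompositeOf (fun ⦃p q : AdObj C⦄ (f : p ⟶ q) => S f.1 ∨ IsIso f) (X := of A w) (Y := of B w')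
      ⟨x, hconj⟩ := by
  induction hx with
  | isIso h => exact .of (Or.inr ((isIso_iff _).2 h))
  | @cons A M B s y hs hgreedy _ ih =>
    obtain ⟨v, hv, hy⟩ := exists_conj_of_greedy hl hs hgreedy hconj
    have hs' : IsCompositeOf (fun ⦃p q : AdObj C⦄ (f : p ⟶ q) => S f.1 ∨ IsIso f)
        (X := of A w) (Y := of M v) ⟨s, hv⟩ := .of (Or.inl hs)
    exact hs'.comp (ih v w' hy)

end LeftCancellative

end AdObj

theorem garside_family_in_conjugacy_category_general
    {C : Type*} [Category C]
    (hl : ∀ {X Y Z : C} (g : X ⟶ Y) (f h : Y ⟶ Z), g ≫ f = g ≫ h → f = h)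
    (S : ∀ ⦃X Y : C⦄, (X ⟶ Y) → Prop)
    (hS : IsGarsideFamily S) :
    IsGarsideFamily (C := AdObj C) (fun ⦃w w'⦄ (f : w ⟶ w') => S f.1) := by
  refine ⟨fun {X Y} f => AdObj.isCompositeOf_of_hasNormalDecomp hl
    (hS.hasNormalDecomp f.1) X.2 Y.2 f.2, ?_, ?_⟩
  · intro X Y Z ε f hε hf
    rw [AdObj.isIso_iff] at hε ⊢
    exact (hS.2.1 ε.1 f.1 hε hf).imp_left AdObj.exists_mem_comp_isIso
  · intro X Y Z f g hf hg hfi hgi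
    rw [AdObj.isIso_iff] at hfi hgi
    refine (hS.2.2 f.1 g.1 hf hg hfi hgi).imp AdObj.exists_mem_comp_isIso ?_
    rintro ⟨Y₁, f₁, g₁, e, hf₁, hg₁, hg₁i, hq⟩
    obtain ⟨v, hv, hw⟩ := AdObj.exists_conj_of_greedy hl hf₁ hq (by rw [← e]; exact (f ≫ g).2)
    exact ⟨AdObj.of Y₁ v, ⟨f₁, hv⟩, ⟨g₁, hw⟩, Subtype.ext e, hf₁,
      AdObj.exists_mem_comp_isIso hg₁, by rwa [AdObj.isIso_iff],
      AdObj.greedy_of_val hl (Y := AdObj.of Y₁ v) hq⟩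

/-- If `S` is a Garside family in a left- and right-cancellative category `C`, then the
morphisms of the conjugacy category `Ad C` whose underlying morphism lies in `S` form a
Garside family in `Ad C`. -/
theorem garside_family_in_conjugacy_category
    {C : Type*} [Category C]
    (hl : ∀ {X Y Z : C} (g : X ⟶ Y) (f h : Y ⟶ Z), g ≫ f = g ≫ h → f = h)
    (hr : ∀ {X Y Z : C} (f h : X ⟶ Y) (g : Y ⟶ Z), f ≫ g = h ≫ g → f = h)
    (S : ∀ ⦃X Y : C⦄, (X ⟶ Y) → Prop)
    (hS : IsGarsideFamily S) :
    IsGarsideFamily (C := AdObj C) (fun ⦃w w'⦄ (f : w ⟶ w') => S f.1) :=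
  garside_family_in_conjugacy_category_general hl S hS
end

section
/- Let V be a finite-dimensional complex vector space, W ⊆ GL(V) a finite subgroup generated by pseudo-reflections, and φ ∈ GL(V) an element of finite order normalizing W. Let n ≥ 1, let W^n act on V^n componentwise, and let σ ∈ GL(V^n) be defined by σ(x₁, …, xₙ) = (x₂, …, xₙ, φ(x₁)). Then for every ζ ∈ ℂ: (1) the ζ-rank of the coset W^n·σ equals the ζⁿ-rank of the coset W·φ, i.e. the maximum over g ∈ W^n·σ of dim ker(g − ζ·id) equals the maximum over h ∈ W·φ of dim ker(h − ζⁿ·id); (2) ζ is regular for W^n·σ if and only if ζⁿ is regular for W·φ, where a scalar ξ is regular for a coset if some element of the coset has a ξ-eigenvector lying outside the fixed hyperplanes ker(r − id) of all pseudo-reflections r of the relevant reflection group (W^n, respectively W). -/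
/-- A pseudo-reflection: an automorphism `≠ 1` whose fixed subspace is a hyperplane. -/
def IsPseudoReflection {K V : Type*} [Field K] [AddCommGroup V] [Module K V]
    (g : V ≃ₗ[K] V) : Prop :=
  g ≠ 1 ∧
    Module.finrank K (LinearMap.ker ((g : V →ₗ[K] V) - LinearMap.id)) + 1 =
      Module.finrank K V

/-- The `ζ`-rank of a set of automorphisms: the maximal dimension of a `ζ`-eigenspace of
an element of the set. -/
noncomputable def eigenRank {K V : Type*} [Field K] [AddCommGroup V] [Module K V]
    (S : Set (V ≃ₗ[K] V)) (ζ : K) : ℕ :=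
  sSup {k : ℕ | ∃ g ∈ S, k = Module.finrank K (Module.End.eigenspace (g : V →ₗ[K] V) ζ)}

/-- The twisted-shift automorphism `σ` of `Vⁿ`:
`σ (x₁, …, xₙ) = (x₂, …, xₙ, φ x₁)`. -/
noncomputable def twistShift {K V : Type*} [Field K] [AddCommGroup V] [Module K V]
    (n : ℕ) (φ : V ≃ₗ[K] V) : (Fin n → V) ≃ₗ[K] (Fin n → V) :=
  (LinearEquiv.piCongrRight
      (fun i : Fin n => if (i : ℕ) = 0 then φ else LinearEquiv.refl K V)).trans
    (LinearEquiv.funCongrLeft K V (finRotate n))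

/-!
Write `g = (w₀, …, wₙ₋₁)·σ`. The equation `g x = ζ x` reads `wᵢ xᵢ₊₁ = ζ xᵢ` for `i < n - 1`
and `wₙ₋₁ φ x₀ = ζ xₙ₋₁`. Hence `x` is determined by `x₀` through
`xₖ = ζᵏ (w₀ ⋯ wₖ₋₁)⁻¹ x₀`, and `x₀` is then exactly a `ζⁿ`-eigenvector of
`(w₀ ⋯ wₙ₋₁) φ ∈ W·φ`; every `u φ` arises this way, from `w = (1, …, 1, u)`. So `x ↦ x₀`
matches the eigenspaces of the two cosets.

For regularity, the codimensions of the fixed spaces of the blocks of an element of `Wⁿ` add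
up, so a pseudo-reflection of `Wⁿ` has exactly one block that is a pseudo-reflection and all
other blocks trivial. A pseudo-reflection `r ∈ W` fixing `x₀` gives the pseudo-reflection
`(r, 1, …, 1)` fixing `x`; conversely, for `w = (1, …, 1, u)` the eigenvector is
`(ζᵏ v)ₖ` with `ζ ≠ 0`, and a block fixing `ζʲ v` fixes `v`.
-/

open Module

section PseudoReflection

variable {K V : Type*} [Field K] [AddCommGroup V] [Module K V]

theorem finrank_quotient_ker_one_sub_id :
    finrank K (V ⧸ LinearMap.ker (((1 : V ≃ₗ[K] V) : V →ₗ[K] V) - LinearMap.id)) = 0 := by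
  rw [LinearEquiv.coe_toLinearMap_one, sub_self, LinearMap.ker_zero]
  exact finrank_eq_zero_of_subsingleton K (V ⧸ ⊤)

theorem isPseudoReflection_iff_finrank_quotient [FiniteDimensional K V] {g : V ≃ₗ[K] V} :
    IsPseudoReflection g ↔
      finrank K (V ⧸ LinearMap.ker ((g : V →ₗ[K] V) - LinearMap.id)) = 1 := by
  have hdim := Submodule.finrank_quotient_add_finrank
    (LinearMap.ker ((g : V →ₗ[K] V) - LinearMap.id))
  refine ⟨fun hg => by rw [← hg.2] at hdim; omega, fun hq => ⟨?_, by omega⟩⟩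
  rintro rfl
  rw [finrank_quotient_ker_one_sub_id] at hq
  exact zero_ne_one hq

theorem ker_piCongrRight_sub_id {ι : Type*} (w : ι → V ≃ₗ[K] V) :
    LinearMap.ker (((LinearEquiv.piCongrRight w : (ι → V) ≃ₗ[K] (ι → V)) :
        (ι → V) →ₗ[K] (ι → V)) - LinearMap.id) =
      Submodule.pi Set.univ fun i => LinearMap.ker ((w i : V →ₗ[K] V) - LinearMap.id) := by
  ext x
  simp [funext_iff]

theorem isPseudoReflection_piCongrRight_iff [FiniteDimensional K V] {ι : Type*} [Fintype ι]
    (w : ι → V ≃ₗ[K] V) :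
    IsPseudoReflection (LinearEquiv.piCongrRight w : (ι → V) ≃ₗ[K] (ι → V)) ↔
      ∑ i, finrank K (V ⧸ LinearMap.ker ((w i : V →ₗ[K] V) - LinearMap.id)) = 1 := by
  classical
  rw [isPseudoReflection_iff_finrank_quotient, ker_piCongrRight_sub_id,
    (Submodule.quotientPi _).finrank_eq, Module.finrank_pi_fintype]

theorem IsPseudoReflection.piCongrRight_mulSingle [FiniteDimensional K V] {ι : Type*}
    [Fintype ι] [DecidableEq ι] {r : V ≃ₗ[K] V} (hr : IsPseudoReflection r) (j : ι) :
    IsPseudoReflection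
      (LinearEquiv.piCongrRight (Pi.mulSingle j r) : (ι → V) ≃ₗ[K] (ι → V)) := by
  rw [isPseudoReflection_piCongrRight_iff, Finset.sum_eq_single j]
  · rw [Pi.mulSingle_eq_same, ← isPseudoReflection_iff_finrank_quotient]
    exact hr
  · intro i _ hij
    rw [Pi.mulSingle_eq_of_ne hij, finrank_quotient_ker_one_sub_id]
  · simp

theorem exists_isPseudoReflection_of_piCongrRight [FiniteDimensional K V] {ι : Type*}
    [Fintype ι] {w : ι → V ≃ₗ[K] V}
    (hw : IsPseudoReflection (LinearEquiv.piCongrRight w : (ι → V) ≃ₗ[K] (ι → V))) :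
    ∃ j, IsPseudoReflection (w j) := by
  simp_rw [isPseudoReflection_iff_finrank_quotient]
  rw [isPseudoReflection_piCongrRight_iff] at hw
  obtain ⟨j, -, hj⟩ := Finset.exists_ne_zero_of_sum_ne_zero (hw ▸ one_ne_zero)
  refine ⟨j, le_antisymm ?_ (Nat.one_le_iff_ne_zero.2 hj)⟩
  calc _ ≤ ∑ i, _ := Finset.single_le_sum (fun _ _ => Nat.zero_le _) (Finset.mem_univ j)
    _ = 1 := hw

end PseudoReflection

theorem Pi.mulSingle_apply_mem {ι M S : Type*} [DecidableEq ι] [One M] [SetLike S M]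
    [OneMemClass S M] {s : S} {x : M} (hx : x ∈ s) (j i : ι) :
    (Pi.mulSingle j x : ι → M) i ∈ s := by
  rcases eq_or_ne i j with rfl | hij
  · simpa using hx
  · simp [Pi.mulSingle_eq_of_ne hij]

namespace Fin

variable {M : Type*} [Monoid M]

theorem partialProd_mem {S : Type*} [SetLike S M] [SubmonoidClass S M] {s : S} {n : ℕ}
    {f : Fin n → M} (hf : ∀ i, f i ∈ s) (i : Fin (n + 1)) : partialProd f i ∈ s :=
  list_prod_mem fun _ hx => by
    obtain ⟨k, rfl⟩ := (List.mem_ofFn' f _).1 (List.mem_of_mem_take hx)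
    exact hf k

theorem partialProd_mulSingle_last_castSucc {m : ℕ} (u : M) (i : Fin (m + 1)) :
    partialProd (Pi.mulSingle (last m) u : Fin (m + 1) → M) i.castSucc = 1 := by
  have hinit : init (Pi.mulSingle (last m) u : Fin (m + 1) → M) = 1 :=
    funext fun k => by simp [init, castSucc_ne_last]
  rw [← partialProd_init, hinit]
  simp [partialProd, Pi.one_def, List.ofFn_const]

theorem partialProd_mulSingle_last_last {m : ℕ} (u : M) :
    partialProd (Pi.mulSingle (last m) u : Fin (m + 1) → M) (last (m + 1)) = u := by
  rw [← succ_last, partialProd_succ, partialProd_mulSingle_last_castSucc, Pi.mulSingle_eq_same,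
    one_mul]

end Fin

section TwistShift

variable {K V : Type*} [Field K] [AddCommGroup V] [Module K V] {m : ℕ}

theorem twistShift_apply_castSucc (φ : V ≃ₗ[K] V) (x : Fin (m + 1) → V) (i : Fin m) :
    twistShift (m + 1) φ x i.castSucc = x i.succ := by
  have hrot : finRotate (m + 1) i.castSucc = i.succ := finRotate_of_lt i.isLt
  simp [twistShift, hrot]

theorem twistShift_apply_last (φ : V ≃ₗ[K] V) (x : Fin (m + 1) → V) :
    twistShift (m + 1) φ x (Fin.last m) = φ (x 0) := by
  simp [twistShift]

theorem piCongrRight_mul_twistShift_apply_eq_smul_iff (w : Fin (m + 1) → V ≃ₗ[K] V)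
    (φ : V ≃ₗ[K] V) (ζ : K) (x : Fin (m + 1) → V) :
    (LinearEquiv.piCongrRight w * twistShift (m + 1) φ) x = ζ • x ↔
      (∀ i : Fin m, w i.castSucc (x i.succ) = ζ • x i.castSucc) ∧
        w (Fin.last m) (φ (x 0)) = ζ • x (Fin.last m) := by
  simp only [funext_iff, Fin.forall_fin_succ', LinearEquiv.mul_apply,
    LinearEquiv.piCongrRight_apply, twistShift_apply_castSucc, twistShift_apply_last,
    Pi.smul_apply]

noncomputable def twistedEigenLift (w : Fin (m + 1) → V ≃ₗ[K] V) (ζ : K) :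
    V →ₗ[K] Fin (m + 1) → V :=
  LinearMap.pi fun k =>
    ζ ^ (k : ℕ) • (((Fin.partialProd w k.castSucc)⁻¹ : V ≃ₗ[K] V) : V →ₗ[K] V)

theorem twistedEigenLift_apply (w : Fin (m + 1) → V ≃ₗ[K] V) (ζ : K) (v : V)
    (k : Fin (m + 1)) :
    twistedEigenLift w ζ v k = ζ ^ (k : ℕ) • (Fin.partialProd w k.castSucc)⁻¹ v :=
  rfl

@[simp]
theorem twistedEigenLift_apply_zero (w : Fin (m + 1) → V ≃ₗ[K] V) (ζ : K) (v : V) :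
    twistedEigenLift w ζ v 0 = v := by
  simp [twistedEigenLift_apply]

theorem twistedEigenLift_injective (w : Fin (m + 1) → V ≃ₗ[K] V) (ζ : K) :
    Function.Injective (twistedEigenLift w ζ) := fun v v' h => by
  simpa using congrFun h 0

theorem partialProd_last_apply (w : Fin (m + 1) → V ≃ₗ[K] V) (v : V) :
    Fin.partialProd w (Fin.last (m + 1)) v =
      Fin.partialProd w (Fin.last m).castSucc (w (Fin.last m) v) := by
  rw [← Fin.succ_last, Fin.partialProd_succ, LinearEquiv.mul_apply]

theorem eq_twistedEigenLift_of_forall_castSucc {w : Fin (m + 1) → V ≃ₗ[K] V} {ζ : K}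
    {x : Fin (m + 1) → V} (hstep : ∀ i : Fin m, w i.castSucc (x i.succ) = ζ • x i.castSucc) :
    x = twistedEigenLift w ζ (x 0) := by
  funext k
  induction k using Fin.induction with
  | zero => simp
  | succ i ih =>
    calc x i.succ = (w i.castSucc)⁻¹ (ζ • x i.castSucc) := by
          rw [← hstep i, LinearEquiv.coe_inv, LinearEquiv.symm_apply_apply]
      _ = twistedEigenLift w ζ (x 0) i.succ := by
          rw [ih, twistedEigenLift_apply, twistedEigenLift_apply, ← Fin.succ_castSucc,
            Fin.partialProd_succ, mul_inv_rev, smul_smul, ← pow_succ', map_smul,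
            LinearEquiv.mul_apply, Fin.val_succ, Fin.val_castSucc]

theorem piCongrRight_mul_twistShift_apply_eq_smul_iff_twistedEigenLift
    (w : Fin (m + 1) → V ≃ₗ[K] V) (φ : V ≃ₗ[K] V) (ζ : K) (x : Fin (m + 1) → V) :
    (LinearEquiv.piCongrRight w * twistShift (m + 1) φ) x = ζ • x ↔
      x = twistedEigenLift w ζ (x 0) ∧
        (Fin.partialProd w (Fin.last (m + 1)) * φ) (x 0) = ζ ^ (m + 1) • x 0 := by
  rw [piCongrRight_mul_twistShift_apply_eq_smul_iff]
  constructor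
  · rintro ⟨hstep, hend⟩
    have hx := eq_twistedEigenLift_of_forall_castSucc hstep
    refine ⟨hx, ?_⟩
    rw [LinearEquiv.mul_apply, partialProd_last_apply, hend, congrFun hx (Fin.last m),
      twistedEigenLift_apply]
    simp [smul_smul, pow_succ']
  · rintro ⟨hx, hend⟩
    generalize x 0 = v at hx hend
    subst hx
    refine ⟨fun i => ?_, ?_⟩
    · rw [twistedEigenLift_apply, twistedEigenLift_apply, ← Fin.succ_castSucc,
        Fin.partialProd_succ, mul_inv_rev, map_smul, LinearEquiv.mul_apply]
      simp [smul_smul, pow_succ']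
    · rw [LinearEquiv.mul_apply, partialProd_last_apply,
        ← LinearEquiv.eq_symm_apply] at hend
      rw [hend, twistedEigenLift_apply]
      simp [smul_smul, pow_succ']

theorem eigenspace_piCongrRight_mul_twistShift (w : Fin (m + 1) → V ≃ₗ[K] V)
    (φ : V ≃ₗ[K] V) (ζ : K) :
    Module.End.eigenspace
        ((LinearEquiv.piCongrRight w * twistShift (m + 1) φ : (Fin (m + 1) → V) ≃ₗ[K] _) :
          (Fin (m + 1) → V) →ₗ[K] Fin (m + 1) → V) ζ =
      (Module.End.eigenspace ((Fin.partialProd w (Fin.last (m + 1)) * φ : V ≃ₗ[K] V) :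
          V →ₗ[K] V) (ζ ^ (m + 1))).map (twistedEigenLift w ζ) := by
  ext x
  simp only [Module.End.mem_eigenspace_iff, Submodule.mem_map, LinearEquiv.coe_coe,
    piCongrRight_mul_twistShift_apply_eq_smul_iff_twistedEigenLift]
  constructor
  · rintro ⟨hx, hend⟩
    exact ⟨x 0, hend, hx.symm⟩
  · rintro ⟨v, hv, rfl⟩
    simpa using hv

theorem finrank_eigenspace_piCongrRight_mul_twistShift (w : Fin (m + 1) → V ≃ₗ[K] V)
    (φ : V ≃ₗ[K] V) (ζ : K) :
    finrank K (Module.End.eigenspace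
        ((LinearEquiv.piCongrRight w * twistShift (m + 1) φ : (Fin (m + 1) → V) ≃ₗ[K] _) :
          (Fin (m + 1) → V) →ₗ[K] Fin (m + 1) → V) ζ) =
      finrank K (Module.End.eigenspace
        ((Fin.partialProd w (Fin.last (m + 1)) * φ : V ≃ₗ[K] V) : V →ₗ[K] V) (ζ ^ (m + 1))) := by
  rw [eigenspace_piCongrRight_mul_twistShift]
  exact (Submodule.equivMapOfInjective _ (twistedEigenLift_injective w ζ) _).finrank_eq.symm

end TwistShift

section Cosets

variable {K V : Type*} [Field K] [AddCommGroup V] [Module K V]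

def IsRegularEigenvalue {E : Type*} [AddCommGroup E] [Module K E] (G S : Set (E ≃ₗ[K] E))
    (ξ : K) : Prop :=
  ∃ g ∈ S, ∃ v : E, v ≠ 0 ∧ g v = ξ • v ∧ ∀ r ∈ G, IsPseudoReflection r → r v ≠ v

variable (W : Subgroup (V ≃ₗ[K] V)) (φ : V ≃ₗ[K] V) (n : ℕ)

def blockDiagonal : Set ((Fin n → V) ≃ₗ[K] (Fin n → V)) :=
  {r | ∃ w : Fin n → V ≃ₗ[K] V, (∀ i, w i ∈ W) ∧ r = LinearEquiv.piCongrRight w}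

def twistedCoset : Set ((Fin n → V) ≃ₗ[K] (Fin n → V)) :=
  {g | ∃ w : Fin n → V ≃ₗ[K] V, (∀ i, w i ∈ W) ∧
    g = LinearEquiv.piCongrRight w * twistShift n φ}

variable {W φ} {m : ℕ}

theorem eigenRank_twistedCoset (ζ : K) :
    eigenRank (twistedCoset W φ (m + 1)) ζ =
      eigenRank {h | ∃ u ∈ W, h = u * φ} (ζ ^ (m + 1)) := by
  unfold eigenRank
  congr 1
  ext k
  constructor
  · rintro ⟨_, ⟨w, hw, rfl⟩, rfl⟩
    exact ⟨_, ⟨_, Fin.partialProd_mem hw _, rfl⟩,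
      finrank_eigenspace_piCongrRight_mul_twistShift w φ ζ⟩
  · rintro ⟨_, ⟨u, hu, rfl⟩, rfl⟩
    refine ⟨_, ⟨Pi.mulSingle (Fin.last m) u, Pi.mulSingle_apply_mem hu _, rfl⟩, ?_⟩
    rw [finrank_eigenspace_piCongrRight_mul_twistShift, Fin.partialProd_mulSingle_last_last]

theorem isRegularEigenvalue_pow_of_twistedCoset [FiniteDimensional K V] {ζ : K}
    (hreg : IsRegularEigenvalue (blockDiagonal W (m + 1)) (twistedCoset W φ (m + 1)) ζ) :
    IsRegularEigenvalue W {h | ∃ u ∈ W, h = u * φ} (ζ ^ (m + 1)) := by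
  obtain ⟨_, ⟨w, hw, rfl⟩, x, hx0, hx, hxreg⟩ := hreg
  obtain ⟨hlift, hend⟩ :=
    (piCongrRight_mul_twistShift_apply_eq_smul_iff_twistedEigenLift w φ ζ x).1 hx
  refine ⟨_, ⟨_, Fin.partialProd_mem hw _, rfl⟩, x 0, fun h0 => hx0 ?_, hend,
    fun r hr hrefl hfix => ?_⟩
  · rw [hlift, h0, map_zero]
  · refine hxreg _ ⟨Pi.mulSingle 0 r, Pi.mulSingle_apply_mem hr 0, rfl⟩
      (hrefl.piCongrRight_mulSingle 0) (funext fun i => ?_)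
    rcases eq_or_ne i 0 with rfl | hi
    · simpa using hfix
    · simp [Pi.mulSingle_eq_of_ne hi]

theorem isRegularEigenvalue_twistedCoset_of_pow [FiniteDimensional K V] {ζ : K}
    (hreg : IsRegularEigenvalue W {h | ∃ u ∈ W, h = u * φ} (ζ ^ (m + 1))) :
    IsRegularEigenvalue (blockDiagonal W (m + 1)) (twistedCoset W φ (m + 1)) ζ := by
  obtain ⟨_, ⟨u, hu, rfl⟩, v, hv0, hv, hvreg⟩ := hreg
  have hζ : ζ ≠ 0 := by
    rintro rfl
    exact hv0 ((u * φ).map_eq_zero_iff.1 (by simpa using hv))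
  set w : Fin (m + 1) → V ≃ₗ[K] V := Pi.mulSingle (Fin.last m) u
  have hlift : twistedEigenLift w ζ v = fun k : Fin (m + 1) => ζ ^ (k : ℕ) • v := by
    funext k
    simp [twistedEigenLift_apply, w, Fin.partialProd_mulSingle_last_castSucc]
  refine ⟨_, ⟨w, Pi.mulSingle_apply_mem hu _, rfl⟩, twistedEigenLift w ζ v,
    fun h => hv0 (by simpa using congrFun h 0), ?_, ?_⟩
  · rw [piCongrRight_mul_twistShift_apply_eq_smul_iff_twistedEigenLift]
    simpa [w, Fin.partialProd_mulSingle_last_last] using hv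
  · rintro _ ⟨w', hw', rfl⟩ hrefl hfix
    obtain ⟨j, hj⟩ := exists_isPseudoReflection_of_piCongrRight hrefl
    have hfixj := congrFun hfix j
    simp only [hlift, LinearEquiv.piCongrRight_apply, map_smul] at hfixj
    exact hvreg _ (hw' j) hj (smul_right_injective V (pow_ne_zero _ hζ) hfixj)

theorem isRegularEigenvalue_twistedCoset_iff [FiniteDimensional K V] (ζ : K) :
    IsRegularEigenvalue (blockDiagonal W (m + 1)) (twistedCoset W φ (m + 1)) ζ ↔
      IsRegularEigenvalue W {h | ∃ u ∈ W, h = u * φ} (ζ ^ (m + 1)) :=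
  ⟨isRegularEigenvalue_pow_of_twistedCoset, isRegularEigenvalue_twistedCoset_of_pow⟩

end Cosets

theorem restriction_of_scalars_rank_and_regularity_general
    {V : Type*} [AddCommGroup V] [Module ℂ V] [FiniteDimensional ℂ V]
    (W : Subgroup (V ≃ₗ[ℂ] V))
    (φ : V ≃ₗ[ℂ] V)
    (n : ℕ) (hn : 1 ≤ n) (ζ : ℂ) :
    eigenRank {g : (Fin n → V) ≃ₗ[ℂ] (Fin n → V) |
        ∃ w : Fin n → (V ≃ₗ[ℂ] V), (∀ i, w i ∈ W) ∧
          g = LinearEquiv.piCongrRight w * twistShift n φ} ζ =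
      eigenRank {h : V ≃ₗ[ℂ] V | ∃ u ∈ W, h = u * φ} (ζ ^ n) ∧
    ((∃ g ∈ {g : (Fin n → V) ≃ₗ[ℂ] (Fin n → V) |
          ∃ w : Fin n → (V ≃ₗ[ℂ] V), (∀ i, w i ∈ W) ∧
            g = LinearEquiv.piCongrRight w * twistShift n φ},
        ∃ v : Fin n → V, v ≠ 0 ∧ g v = ζ • v ∧
          ∀ r : (Fin n → V) ≃ₗ[ℂ] (Fin n → V),
            (∃ w : Fin n → (V ≃ₗ[ℂ] V), (∀ i, w i ∈ W) ∧
              r = LinearEquiv.piCongrRight w) →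
            IsPseudoReflection r → r v ≠ v) ↔
      (∃ h ∈ {h : V ≃ₗ[ℂ] V | ∃ u ∈ W, h = u * φ},
        ∃ v : V, v ≠ 0 ∧ h v = ζ ^ n • v ∧
          ∀ r : V ≃ₗ[ℂ] V, r ∈ W → IsPseudoReflection r → r v ≠ v)) := by
  obtain ⟨m, rfl⟩ : ∃ m, n = m + 1 := ⟨n - 1, by omega⟩
  exact ⟨eigenRank_twistedCoset ζ, isRegularEigenvalue_twistedCoset_iff ζ⟩

/-- Restriction of scalars for complex reflection cosets: the `ζ`-rank of the coset
`Wⁿ·σ` equals the `ζⁿ`-rank of `W·φ`, and `ζ` is regular for `Wⁿ·σ` iff `ζⁿ` is regular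
for `W·φ`. -/
theorem restriction_of_scalars_rank_and_regularity
    {V : Type*} [AddCommGroup V] [Module ℂ V] [FiniteDimensional ℂ V]
    (W : Subgroup (V ≃ₗ[ℂ] V)) (hWfin : (W : Set (V ≃ₗ[ℂ] V)).Finite)
    (hWrefl : Subgroup.closure {g : V ≃ₗ[ℂ] V | g ∈ W ∧ IsPseudoReflection g} = W)
    (φ : V ≃ₗ[ℂ] V) (hφord : IsOfFinOrder φ)
    (hφnorm : ∀ u ∈ W, φ * u * φ⁻¹ ∈ W)
    (n : ℕ) (hn : 1 ≤ n) (ζ : ℂ) :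
    eigenRank {g : (Fin n → V) ≃ₗ[ℂ] (Fin n → V) |
        ∃ w : Fin n → (V ≃ₗ[ℂ] V), (∀ i, w i ∈ W) ∧
          g = LinearEquiv.piCongrRight w * twistShift n φ} ζ =
      eigenRank {h : V ≃ₗ[ℂ] V | ∃ u ∈ W, h = u * φ} (ζ ^ n) ∧
    ((∃ g ∈ {g : (Fin n → V) ≃ₗ[ℂ] (Fin n → V) |
          ∃ w : Fin n → (V ≃ₗ[ℂ] V), (∀ i, w i ∈ W) ∧
            g = LinearEquiv.piCongrRight w * twistShift n φ},
        ∃ v : Fin n → V, v ≠ 0 ∧ g v = ζ • v ∧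
          ∀ r : (Fin n → V) ≃ₗ[ℂ] (Fin n → V),
            (∃ w : Fin n → (V ≃ₗ[ℂ] V), (∀ i, w i ∈ W) ∧
              r = LinearEquiv.piCongrRight w) →
            IsPseudoReflection r → r v ≠ v) ↔
      (∃ h ∈ {h : V ≃ₗ[ℂ] V | ∃ u ∈ W, h = u * φ},
        ∃ v : V, v ≠ 0 ∧ h v = ζ ^ n • v ∧
          ∀ r : V ≃ₗ[ℂ] V, r ∈ W → IsPseudoReflection r → r v ≠ v)) :=
  restriction_of_scalars_rank_and_regularity_general W φ n hn ζ
end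

section
/- Let X be a finite-dimensional complex vector space, W ⊆ GL(X) a finite subgroup generated by pseudo-reflections, φ ∈ GL(X) of finite order normalizing W, w ∈ W, ζ ∈ ℂ, and V = ker(w∘φ − ζ·id) the ζ-eigenspace of wφ. Let C_W(V) = { g ∈ W : g v = v for all v ∈ V } be the pointwise stabilizer of V. Then the setwise stabilizer of V in W coincides with the normalizer in W of the coset C_W(V)·wφ: for g ∈ W, one has g(V) = V if and only if g · (C_W(V)·wφ) · g⁻¹ = C_W(V)·wφ (as subsets of GL(X)). -/
/-- For a complex reflection coset `W·φ` and an element `wφ` with `ζ`-eigenspace `V`, an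
element `g ∈ W` stabilizes `V` setwise if and only if it normalizes the coset
`C_W(V)·wφ`. -/
theorem setwise_stabilizer_eq_normalizer_of_coset
    {X : Type*} [AddCommGroup X] [Module ℂ X] [FiniteDimensional ℂ X]
    (W : Subgroup (X ≃ₗ[ℂ] X)) (hWfin : (W : Set (X ≃ₗ[ℂ] X)).Finite)
    (hWrefl : Subgroup.closure {g : X ≃ₗ[ℂ] X | g ∈ W ∧ IsPseudoReflection g} = W)
    (φ : X ≃ₗ[ℂ] X) (hφord : IsOfFinOrder φ)
    (hφnorm : ∀ u ∈ W, φ * u * φ⁻¹ ∈ W)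
    (w : X ≃ₗ[ℂ] X) (hw : w ∈ W) (ζ : ℂ)
    (V : Submodule ℂ X)
    (hV : V = Module.End.eigenspace ((w * φ : X ≃ₗ[ℂ] X) : X →ₗ[ℂ] X) ζ)
    -- the coset `C_W(V)·wφ`, where `C_W(V)` is the pointwise stabilizer of `V` in `W`
    (Cset : Set (X ≃ₗ[ℂ] X))
    (hCset : Cset = (fun u => u * (w * φ)) '' {u | u ∈ W ∧ ∀ v ∈ V, u v = v})
    (g : X ≃ₗ[ℂ] X) (hg : g ∈ W) :
    Submodule.map (g : X →ₗ[ℂ] X) V = V ↔ (fun h => g * h * g⁻¹) '' Cset = Cset := by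
  have hmemV : ∀ v : X, v ∈ V ↔ (w * φ) v = ζ • v := by
    intro v
    rw [hV, Module.End.mem_eigenspace_iff]
    exact Iff.rfl
  -- key: conjugation by any g' ∈ W with g'(V) = V maps Cset into Cset
  have key : ∀ g' : X ≃ₗ[ℂ] X, g' ∈ W → Submodule.map (g' : X →ₗ[ℂ] X) V = V →
      ∀ x ∈ Cset, g' * x * g'⁻¹ ∈ Cset := by
    intro g' hg' hmap x hx
    rw [hCset] at hx ⊢
    obtain ⟨u, ⟨huW, hufix⟩, rfl⟩ := hx
    refine ⟨g' * u * (w * φ) * g'⁻¹ * (w * φ)⁻¹, ⟨?_, ?_⟩, by group⟩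
    · have h1 : w * (φ * g'⁻¹ * φ⁻¹) * w⁻¹ ∈ W :=
        W.mul_mem (W.mul_mem hw (hφnorm g'⁻¹ (W.inv_mem hg'))) (W.inv_mem hw)
      have h2 : (g' * u) * (w * (φ * g'⁻¹ * φ⁻¹) * w⁻¹) ∈ W :=
        W.mul_mem (W.mul_mem hg' huW) h1
      have heq : g' * u * (w * φ) * g'⁻¹ * (w * φ)⁻¹
          = (g' * u) * (w * (φ * g'⁻¹ * φ⁻¹) * w⁻¹) := by group
      rw [heq]; exact h2
    · intro v hv
      -- v₁ = (wφ)⁻¹ v ∈ V with ζ • v₁ = v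
      have hfv : (w * φ) v = ζ • v := (hmemV v).1 hv
      set v₁ : X := (w * φ)⁻¹ v with hv₁
      have hζv₁ : ζ • v₁ = v := by
        have h0 : (w * φ)⁻¹ ((w * φ) v) = (w * φ)⁻¹ (ζ • v) := congrArg _ hfv
        have h1 : (w * φ)⁻¹ ((w * φ) v) = v := (w * φ).symm_apply_apply v
        have h2 : (w * φ)⁻¹ (ζ • v) = ζ • v₁ := map_smul ((w * φ)⁻¹) ζ v
        exact h2.symm.trans (h0.symm.trans h1)
      have hv₁V : v₁ ∈ V := by
        rw [hmemV]
        have : (w * φ) v₁ = v := (w * φ).apply_symm_apply v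
        rw [this, ← hζv₁]
      -- v₂ = g'⁻¹ v₁ ∈ V
      obtain ⟨v₂, hv₂V, hv₂⟩ : ∃ p ∈ V, g' p = v₁ := by
        have h : v₁ ∈ Submodule.map (g' : X →ₗ[ℂ] X) V := by rw [hmap]; exact hv₁V
        exact Submodule.mem_map.mp h
      have hg'inv : g'⁻¹ v₁ = v₂ := by rw [← hv₂]; exact g'.symm_apply_apply v₂
      have hfv₂ : (w * φ) v₂ = ζ • v₂ := (hmemV v₂).1 hv₂V
      -- compute
      show (g' * u * (w * φ) * g'⁻¹ * (w * φ)⁻¹) v = v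
      have : (g' * u * (w * φ) * g'⁻¹ * (w * φ)⁻¹) v
          = g' (u ((w * φ) (g'⁻¹ ((w * φ)⁻¹ v)))) := rfl
      rw [this, ← hv₁, hg'inv, hfv₂, hufix _ (V.smul_mem ζ hv₂V), map_smul, hv₂, hζv₁]
  constructor
  · intro hmap
    have hmapinv : Submodule.map ((g⁻¹ : X ≃ₗ[ℂ] X) : X →ₗ[ℂ] X) V = V := by
      have hcomp : ((g⁻¹ : X ≃ₗ[ℂ] X) : X →ₗ[ℂ] X).comp (g : X →ₗ[ℂ] X)
          = LinearMap.id := by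
        ext x; exact g.symm_apply_apply x
      calc Submodule.map ((g⁻¹ : X ≃ₗ[ℂ] X) : X →ₗ[ℂ] X) V
          = Submodule.map ((g⁻¹ : X ≃ₗ[ℂ] X) : X →ₗ[ℂ] X)
              (Submodule.map (g : X →ₗ[ℂ] X) V) := by rw [hmap]
        _ = Submodule.map (((g⁻¹ : X ≃ₗ[ℂ] X) : X →ₗ[ℂ] X).comp (g : X →ₗ[ℂ] X)) V :=
            (Submodule.map_comp _ _ _).symm
        _ = V := by rw [hcomp, Submodule.map_id]
    apply Set.eq_of_subset_of_subset
    · rintro _ ⟨x, hx, rfl⟩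
      exact key g hg hmap x hx
    · intro x hx
      refine ⟨g⁻¹ * x * (g⁻¹)⁻¹, key g⁻¹ (W.inv_mem hg) hmapinv x hx, by group⟩
  · intro hconj
    have hle : Submodule.map (g : X →ₗ[ℂ] X) V ≤ V := by
      rintro _ ⟨v, hv, rfl⟩
      have hwφ : (w * φ) ∈ Cset := by
        rw [hCset]
        exact ⟨1, ⟨W.one_mem, fun v _ => rfl⟩, by group⟩
      rw [← hconj] at hwφ
      obtain ⟨x, hx, hxeq⟩ := hwφ
      rw [hCset] at hx
      obtain ⟨u, ⟨huW, hufix⟩, rfl⟩ := hx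
      show (g : X →ₗ[ℂ] X) v ∈ V
      rw [hmemV]
      have hxeq' : g * (u * (w * φ)) * g⁻¹ = w * φ := hxeq
      have h1 : (w * φ) (g v) = (g * (u * (w * φ)) * g⁻¹) (g v) := by rw [hxeq']
      have h2 : (g * (u * (w * φ)) * g⁻¹) (g v) = g (u ((w * φ) (g⁻¹ (g v)))) := rfl
      have h3 : g⁻¹ (g v) = v := g.symm_apply_apply v
      have hfv : (w * φ) v = ζ • v := (hmemV v).1 hv
      show (w * φ) (g v) = ζ • g v
      rw [h1, h2, h3, hfv, hufix _ (V.smul_mem ζ hv), map_smul]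
    apply Submodule.eq_of_le_of_finrank_le hle
    rw [LinearEquiv.finrank_map_eq g V]
end

section
/- Let X be a finite-dimensional complex vector space, W ⊆ GL(X) a finite subgroup generated by pseudo-reflections, φ ∈ GL(X) of finite order normalizing W, w ∈ W, ζ ∈ ℂ, and V = ker(w∘φ − ζ·id). Let W' ≤ W be a parabolic subgroup (the pointwise stabilizer in W of some subspace of X) which is stable under conjugation by wφ and contains the pointwise stabilizer C_W(V) of V, and let X' = Σ_{g ∈ W'} Im(g − id) be the subspace spanned by the root lines of W'. Then the following are equivalent: (i) V ∩ X' = 0; (ii) C_W(V) = W'. -/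
/-- Let `V` be the `ζ`-eigenspace of `wφ` in a complex reflection coset, `W'` a parabolic
subgroup of `W` stable under conjugation by `wφ` and containing `C_W(V)`, and `X'` the
subspace spanned by the root lines of `W'`.  Then `V ∩ X' = 0` iff `C_W(V) = W'`. -/
theorem eigenspace_meets_rootspace_iff_pointwise_stabilizer
    {X : Type*} [AddCommGroup X] [Module ℂ X] [FiniteDimensional ℂ X]
    (W : Subgroup (X ≃ₗ[ℂ] X)) (hWfin : (W : Set (X ≃ₗ[ℂ] X)).Finite)
    (hWrefl : Subgroup.closure {g : X ≃ₗ[ℂ] X | g ∈ W ∧ IsPseudoReflection g} = W)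
    (φ : X ≃ₗ[ℂ] X) (hφord : IsOfFinOrder φ)
    (hφnorm : ∀ u ∈ W, φ * u * φ⁻¹ ∈ W)
    (w : X ≃ₗ[ℂ] X) (hw : w ∈ W) (ζ : ℂ)
    (V : Submodule ℂ X)
    (hV : V = Module.End.eigenspace ((w * φ : X ≃ₗ[ℂ] X) : X →ₗ[ℂ] X) ζ)
    (W' : Set (X ≃ₗ[ℂ] X))
    -- `W'` is a parabolic subgroup of `W`: a pointwise stabilizer in `W` of a subspace
    (hW'par : ∃ U : Submodule ℂ X, W' = {u | u ∈ W ∧ ∀ x ∈ U, u x = x})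
    -- `W'` is stable under conjugation by `wφ`
    (hW'stab : ∀ u ∈ W', (w * φ) * u * (w * φ)⁻¹ ∈ W')
    -- `W'` contains `C_W(V)`
    (hW'sup : {u : X ≃ₗ[ℂ] X | u ∈ W ∧ ∀ v ∈ V, u v = v} ⊆ W')
    -- `X'`: the subspace spanned by the root lines of `W'`
    (X' : Submodule ℂ X)
    (hX' : X' = ⨆ g ∈ W', LinearMap.range ((g : X →ₗ[ℂ] X) - LinearMap.id)) :
    V ⊓ X' = ⊥ ↔ {u : X ≃ₗ[ℂ] X | u ∈ W ∧ ∀ v ∈ V, u v = v} = W' := by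
  classical
  obtain ⟨U, hU⟩ := hW'par
  set a : X ≃ₗ[ℂ] X := w * φ with ha
  -- basic closure properties of W'
  have hW'W : ∀ g ∈ W', g ∈ W := fun g hg => by rw [hU] at hg; exact hg.1
  have h1 : (1 : X ≃ₗ[ℂ] X) ∈ W' := by rw [hU]; exact ⟨one_mem W, fun x _ => rfl⟩
  have hmul : ∀ g ∈ W', ∀ h ∈ W', g * h ∈ W' := by
    rw [hU]
    rintro g ⟨hgW, hgU⟩ h ⟨hhW, hhU⟩
    refine ⟨mul_mem hgW hhW, fun x hx => ?_⟩
    show g (h x) = x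
    rw [hhU x hx, hgU x hx]
  have hinv : ∀ g ∈ W', g⁻¹ ∈ W' := by
    rw [hU]
    rintro g ⟨hgW, hgU⟩
    refine ⟨inv_mem hgW, fun x hx => ?_⟩
    conv_lhs => rw [← hgU x hx]
    show (g⁻¹ * g) x = x
    rw [inv_mul_cancel]; rfl
  have hfin : W'.Finite := hWfin.subset hW'W
  set s : Finset (X ≃ₗ[ℂ] X) := hfin.toFinset with hs
  have hmem : ∀ g, g ∈ s ↔ g ∈ W' := fun g => hfin.mem_toFinset
  have hcard : (s.card : ℂ) ≠ 0 :=
    Nat.cast_ne_zero.2 (Finset.card_pos.2 ⟨1, (hmem 1).2 h1⟩).ne'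
  -- the averaging projector
  set π : X →ₗ[ℂ] X := (s.card : ℂ)⁻¹ • ∑ g ∈ s, (g : X →ₗ[ℂ] X) with hπ
  have hπapp : ∀ x, π x = (s.card : ℂ)⁻¹ • ∑ g ∈ s, g x := by
    intro x
    simp [hπ, LinearMap.sum_apply]
  -- Fix predicate
  have hπfix : ∀ x, (∀ g ∈ W', g x = x) → π x = x := by
    intro x hx
    rw [hπapp]
    rw [Finset.sum_congr rfl fun g hg => hx g ((hmem g).1 hg), Finset.sum_const,
      ← Nat.cast_smul_eq_nsmul ℂ, smul_smul, inv_mul_cancel₀ hcard, one_smul]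
  have hπmemfix : ∀ x, ∀ g ∈ W', g (π x) = π x := by
    intro x g hg
    rw [hπapp, map_smul, map_sum]
    congr 1
    refine Finset.sum_equiv (Equiv.mulLeft g) (fun h => ?_) (fun h _ => rfl)
    simp only [Equiv.coe_mulLeft, hmem]
    exact ⟨fun hh => hmul g hg h hh, fun hh => by
      have := hmul _ (hinv g hg) _ hh; rwa [inv_mul_cancel_left] at this⟩
  have hπX' : ∀ x ∈ X', π x = 0 := by
    intro x hx
    have : X' ≤ LinearMap.ker π := by
      rw [hX']
      refine iSup₂_le fun g hg => ?_
      rintro y ⟨x, rfl⟩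
      simp only [LinearMap.mem_ker, LinearMap.sub_apply, LinearMap.id_apply,
        LinearEquiv.coe_coe, map_sub]
      rw [sub_eq_zero, hπapp, hπapp]
      congr 1
      refine Finset.sum_equiv (Equiv.mulRight g) (fun h => ?_) (fun h _ => rfl)
      simp only [Equiv.coe_mulRight, hmem]
      exact ⟨fun hh => hmul h hh g hg, fun hh => by
        have := hmul _ hh _ (hinv g hg); rwa [mul_inv_cancel_right] at this⟩
    exact this hx
  have hX'mem : ∀ g ∈ W', ∀ x : X, g x - x ∈ X' := by
    intro g hg x
    rw [hX']
    refine Submodule.mem_iSup_of_mem g (Submodule.mem_iSup_of_mem hg ⟨x, ?_⟩)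
    simp
  have hdecomp : ∀ x : X, x - π x ∈ X' := by
    intro x
    have : x - π x = -((s.card : ℂ)⁻¹ • ∑ g ∈ s, (g x - x)) := by
      rw [Finset.sum_sub_distrib, Finset.sum_const, smul_sub, neg_sub,
        ← Nat.cast_smul_eq_nsmul ℂ, smul_smul, inv_mul_cancel₀ hcard, one_smul, hπapp]
    rw [this]
    exact neg_mem (Submodule.smul_mem _ _ (Submodule.sum_mem _ fun g hg =>
      hX'mem g ((hmem g).1 hg) x))
  -- conjugation by a is a bijection of W'
  have hconjsurj : ∀ h ∈ W', ∃ g ∈ W', a * g * a⁻¹ = h := by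
    intro h hh
    have hinj : Function.Injective (fun g : X ≃ₗ[ℂ] X => a * g * a⁻¹) := by
      intro g₁ g₂ hgg
      simpa using hgg
    have hsub : s.image (fun g => a * g * a⁻¹) ⊆ s := by
      intro g hg
      obtain ⟨g', hg', rfl⟩ := Finset.mem_image.1 hg
      exact (hmem _).2 (hW'stab _ ((hmem _).1 hg'))
    have himg : s.image (fun g => a * g * a⁻¹) = s := Finset.eq_of_subset_of_card_le hsub
      (by rw [Finset.card_image_of_injective _ hinj])
    have hhs : h ∈ s.image (fun g => a * g * a⁻¹) := by rw [himg]; exact (hmem h).2 hh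
    obtain ⟨g, hg, hgh⟩ := Finset.mem_image.1 hhs
    exact ⟨g, (hmem g).1 hg, hgh⟩
  -- a-stability of X'
  have haX' : ∀ x ∈ X', a x ∈ X' := by
    intro x hx
    have : X' ≤ Submodule.comap (a : X →ₗ[ℂ] X) X' := by
      rw [hX']
      refine iSup₂_le fun g hg => ?_
      rintro y ⟨x, rfl⟩
      simp only [Submodule.mem_comap, LinearMap.sub_apply, LinearMap.id_apply,
        LinearEquiv.coe_coe, map_sub]
      have : a (g x) - a x = (a * g * a⁻¹) (a x) - a x := by
        show _ = a (g (a⁻¹ (a x))) - a x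
        rw [show a⁻¹ (a x) = x from by
          show (a⁻¹ * a) x = x; rw [inv_mul_cancel]; rfl]
      rw [this]
      exact hX' ▸ hX'mem _ (hW'stab g hg) (a x)
    exact this hx
  -- a-stability of the fixed space
  have haF : ∀ x, (∀ g ∈ W', g x = x) → ∀ g ∈ W', g (a x) = a x := by
    intro x hx h hh
    obtain ⟨g, hg, rfl⟩ := hconjsurj h hh
    show a (g (a⁻¹ (a x))) = a x
    rw [show a⁻¹ (a x) = x from by
      show (a⁻¹ * a) x = x; rw [inv_mul_cancel]; rfl, hx g hg]
  -- eigenvalue membership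
  have hVmem : ∀ v, v ∈ V ↔ a v = ζ • v := by
    intro v
    rw [hV, Module.End.mem_eigenspace_iff]
    rfl
  constructor
  · -- forward
    intro hbot
    refine Set.Subset.antisymm hW'sup fun g hg => ?_
    refine ⟨hW'W g hg, fun v hv => ?_⟩
    -- decompose v
    have hav : a v = ζ • v := (hVmem v).1 hv
    have hfixπv : ∀ h ∈ W', h (π v) = π v := hπmemfix v
    have hxX' : v - π v ∈ X' := hdecomp v
    -- show the X'-component is in V
    have key : a (π v) - ζ • π v = 0 := by
      have h1' : ∀ h ∈ W', h (a (π v) - ζ • π v) = a (π v) - ζ • π v := by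
        intro h hh
        rw [map_sub, map_smul, haF (π v) hfixπv h hh, hfixπv h hh]
      have h2' : a (π v) - ζ • π v ∈ X' := by
        have : a (π v) - ζ • π v = -(a (v - π v) - ζ • (v - π v)) := by
          rw [map_sub, hav]; rw [smul_sub]; abel
        rw [this]
        exact neg_mem (sub_mem (haX' _ hxX') (Submodule.smul_mem _ _ hxX'))
      have := hπfix _ h1'
      rw [hπX' _ h2'] at this
      exact this.symm
    have hxV : v - π v ∈ V := by
      rw [hVmem, map_sub, hav, smul_sub]
      have : a (π v) = ζ • π v := by rwa [sub_eq_zero] at key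
      rw [this]
    have : v - π v ∈ V ⊓ X' := ⟨hxV, hxX'⟩
    rw [hbot] at this
    have hvπ : v = π v := by
      have := (Submodule.mem_bot ℂ).1 this
      linear_combination (norm := module) this
    rw [hvπ]
    exact hfixπv g hg
  · -- backward
    intro heq
    rw [eq_bot_iff]
    rintro v ⟨hvV, hvX'⟩
    have hfix : ∀ g ∈ W', g v = v := by
      intro g hg
      rw [← heq] at hg
      exact hg.2 v hvV
    have := hπfix v hfix
    rw [hπX' v hvX'] at this
    simpa using this.symm
end

section
/- Let X be a finite-dimensional complex vector space, W ⊆ GL(X) a finite subgroup generated by pseudo-reflections, φ ∈ GL(X) of finite order normalizing W, w ∈ W, ζ ∈ ℂ, and V = ker(w∘φ − ζ·id). Let W' ≤ W be a parabolic subgroup (the pointwise stabilizer in W of some subspace of X) which is stable under conjugation by wφ and contains the pointwise stabilizer C_W(V) of V, and let X' = Σ_{g ∈ W'} Im(g − id). Then the following are equivalent: (iv) no element of the coset W'·wφ has a non-zero ζ-eigenvector in X', i.e. ker(v∘w∘φ − ζ·id) ∩ X' = 0 for every v ∈ W'; (ii)∧(iii): C_W(V) = W' and V is maximal among the ζ-eigenspaces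 of elements of the coset W·φ, i.e. for every u ∈ W, if V ⊆ ker(u∘φ − ζ·id) then V = ker(u∘φ − ζ·id). -/
/-- Averaging projector for a finite group of linear automorphisms (given as a set
closed under the group operations). -/
lemma exists_avg_proj {X : Type*} [AddCommGroup X] [Module ℂ X]
    (G : Set (X ≃ₗ[ℂ] X)) (hfin : G.Finite)
    (h1 : (1 : X ≃ₗ[ℂ] X) ∈ G)
    (hmul : ∀ a ∈ G, ∀ b ∈ G, a * b ∈ G)
    (hinv : ∀ a ∈ G, a⁻¹ ∈ G) :
    ∃ p : X →ₗ[ℂ] X,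
      (∀ x, ∀ g ∈ G, g (p x) = p x) ∧
      (∀ x, (∀ g ∈ G, g x = x) → p x = x) ∧
      (∀ x, x - p x ∈ ⨆ g ∈ G, LinearMap.range ((g : X →ₗ[ℂ] X) - LinearMap.id)) ∧
      (∀ x ∈ (⨆ g ∈ G, LinearMap.range ((g : X →ₗ[ℂ] X) - LinearMap.id)), p x = 0) := by
  classical
  set s := hfin.toFinset with hs
  have hmem : ∀ g, g ∈ s ↔ g ∈ G := fun g => hfin.mem_toFinset
  have hcard : (s.card : ℂ) ≠ 0 := by
    have : s.Nonempty := ⟨1, (hmem 1).2 h1⟩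
    exact_mod_cast Finset.card_ne_zero_of_mem ((hmem 1).2 h1)
  set p : X →ₗ[ℂ] X := (s.card : ℂ)⁻¹ • ∑ g ∈ s, (g : X →ₗ[ℂ] X) with hp
  have hpapp : ∀ x, p x = (s.card : ℂ)⁻¹ • ∑ g ∈ s, g x := by
    intro x; simp [hp, LinearMap.sum_apply]
  -- left reindexing
  have hleft : ∀ g ∈ G, ∀ x, (∑ h ∈ s, g (h x)) = ∑ h ∈ s, h x := by
    intro g hg x
    refine Finset.sum_equiv (Equiv.mulLeft g) (fun h => ?_) (fun h hh => ?_)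
    · simp only [hmem, Equiv.coe_mulLeft]
      constructor
      · intro hh; exact hmul g hg h hh
      · intro hh
        have := hmul _ (hinv g hg) _ hh
        simpa [← mul_assoc] using this
    · simp only [Equiv.coe_mulLeft]; rfl
  have hright : ∀ g ∈ G, ∀ x, (∑ h ∈ s, h (g x)) = ∑ h ∈ s, h x := by
    intro g hg x
    refine Finset.sum_equiv (Equiv.mulRight g) (fun h => ?_) (fun h hh => ?_)
    · simp only [hmem, Equiv.coe_mulRight]
      constructor
      · intro hh; exact hmul h hh g hg
      · intro hh
        have := hmul _ hh _ (hinv g hg)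
        simpa [mul_assoc] using this
    · simp only [Equiv.coe_mulRight]; rfl
  refine ⟨p, ?_, ?_, ?_, ?_⟩
  · intro x g hg
    rw [hpapp, map_smul, map_sum]
    congr 1
    exact hleft g hg x
  · intro x hx
    rw [hpapp]
    have : (∑ g ∈ s, g x) = s.card • x := by
      rw [Finset.sum_congr rfl (fun g hg => hx g ((hmem g).1 hg)), Finset.sum_const]
    rw [this, ← Nat.cast_smul_eq_nsmul ℂ, smul_smul, inv_mul_cancel₀ hcard, one_smul]
  · intro x
    have hx : x - p x = (s.card : ℂ)⁻¹ • ∑ g ∈ s, (x - g x) := by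
      rw [Finset.sum_sub_distrib, Finset.sum_const, smul_sub, ← Nat.cast_smul_eq_nsmul ℂ,
        smul_smul, inv_mul_cancel₀ hcard, one_smul, hpapp]
    rw [hx]
    refine Submodule.smul_mem _ _ (Submodule.sum_mem _ (fun g hg => ?_))
    have h2 : g x - x ∈ LinearMap.range (((g : X ≃ₗ[ℂ] X) : X →ₗ[ℂ] X) - LinearMap.id) :=
      ⟨x, by simp⟩
    have hsub := le_iSup₂ (f := fun (g : X ≃ₗ[ℂ] X) (_ : g ∈ G) =>
      LinearMap.range (((g : X ≃ₗ[ℂ] X) : X →ₗ[ℂ] X) - LinearMap.id)) g ((hmem g).1 hg)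
    have h3 := neg_mem (hsub h2)
    simpa using h3
  · intro x hx
    have hker : (⨆ g ∈ G, LinearMap.range ((g : X →ₗ[ℂ] X) - LinearMap.id)) ≤
        LinearMap.ker p := by
      refine iSup₂_le fun g hg => ?_
      rintro y ⟨z, rfl⟩
      have : p (g z) = p z := by
        rw [hpapp, hpapp]
        congr 1
        exact hright g hg z
      simp [LinearMap.mem_ker, LinearMap.sub_apply, map_sub, this]
    exact hker hx



/-- Let `V` be the `ζ`-eigenspace of `wφ` in a complex reflection coset, `W'` a parabolic
subgroup of `W` stable under conjugation by `wφ` and containing `C_W(V)`, and `X'` the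
subspace spanned by the root lines of `W'`.  Then no element of `W'·wφ` has a non-zero
`ζ`-eigenvector in `X'` if and only if `C_W(V) = W'` and `V` is maximal among the
`ζ`-eigenspaces of elements of `W·φ`. -/
theorem no_eigenvector_in_rootspace_iff_stabilizer_and_maximal
    {X : Type*} [AddCommGroup X] [Module ℂ X] [FiniteDimensional ℂ X]
    (W : Subgroup (X ≃ₗ[ℂ] X)) (hWfin : (W : Set (X ≃ₗ[ℂ] X)).Finite)
    (hWrefl : Subgroup.closure {g : X ≃ₗ[ℂ] X | g ∈ W ∧ IsPseudoReflection g} = W)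
    (φ : X ≃ₗ[ℂ] X) (hφord : IsOfFinOrder φ)
    (hφnorm : ∀ u ∈ W, φ * u * φ⁻¹ ∈ W)
    (w : X ≃ₗ[ℂ] X) (hw : w ∈ W) (ζ : ℂ)
    (V : Submodule ℂ X)
    (hV : V = Module.End.eigenspace ((w * φ : X ≃ₗ[ℂ] X) : X →ₗ[ℂ] X) ζ)
    (W' : Set (X ≃ₗ[ℂ] X))
    (hW'par : ∃ U : Submodule ℂ X, W' = {u | u ∈ W ∧ ∀ x ∈ U, u x = x})
    (hW'stab : ∀ u ∈ W', (w * φ) * u * (w * φ)⁻¹ ∈ W')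
    (hW'sup : {u : X ≃ₗ[ℂ] X | u ∈ W ∧ ∀ v ∈ V, u v = v} ⊆ W')
    (X' : Submodule ℂ X)
    (hX' : X' = ⨆ g ∈ W', LinearMap.range ((g : X →ₗ[ℂ] X) - LinearMap.id)) :
    (∀ v ∈ W',
        Module.End.eigenspace ((v * (w * φ) : X ≃ₗ[ℂ] X) : X →ₗ[ℂ] X) ζ ⊓ X' = ⊥) ↔
      ({u : X ≃ₗ[ℂ] X | u ∈ W ∧ ∀ v ∈ V, u v = v} = W' ∧
        ∀ u ∈ W, V ≤ Module.End.eigenspace ((u * φ : X ≃ₗ[ℂ] X) : X →ₗ[ℂ] X) ζ →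
          V = Module.End.eigenspace ((u * φ : X ≃ₗ[ℂ] X) : X →ₗ[ℂ] X) ζ) := by
  classical
  obtain ⟨U, hU⟩ := hW'par
  -- basic group facts about W'
  have hsubW : ∀ u ∈ W', u ∈ W := by
    intro u hu; rw [hU] at hu; exact hu.1
  have h1 : (1 : X ≃ₗ[ℂ] X) ∈ W' := by
    rw [hU]; exact ⟨W.one_mem, fun x _ => rfl⟩
  have hmulapp : ∀ (a b : X ≃ₗ[ℂ] X) (x : X), (a * b) x = a (b x) := fun a b x => rfl
  have hmul : ∀ a ∈ W', ∀ b ∈ W', a * b ∈ W' := by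
    intro a ha b hb; rw [hU] at ha hb ⊢
    exact ⟨W.mul_mem ha.1 hb.1, fun x hx => by rw [hmulapp, hb.2 x hx, ha.2 x hx]⟩
  have hinv : ∀ a ∈ W', a⁻¹ ∈ W' := by
    intro a ha; rw [hU] at ha ⊢
    refine ⟨W.inv_mem ha.1, fun x hx => ?_⟩
    have : a (a⁻¹ x) = a x := by
      rw [← hmulapp, mul_inv_cancel, ha.2 x hx]; rfl
    have := a.injective this
    exact this
  have hfin : W'.Finite := hWfin.subset (fun u hu => hsubW u hu)
  -- averaging projector
  obtain ⟨p, hpfix, hpid, hpres, hpker⟩ := exists_avg_proj W' hfin h1 hmul hinv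
  rw [← hX'] at hpres hpker
  -- conjugation by (w*φ)⁻¹ preserves W'
  have hconjinv : ∀ g ∈ W', (w * φ)⁻¹ * g * (w * φ) ∈ W' := by
    intro g hg
    have hmaps : Set.MapsTo (fun u => (w * φ) * u * (w * φ)⁻¹) W' W' := fun u hu =>
      hW'stab u hu
    have hinj : Set.InjOn (fun u => (w * φ) * u * (w * φ)⁻¹) W' := by
      intro a _ b _ hab
      simpa using mul_right_cancel (mul_left_cancel (a := w * φ) hab)
    obtain ⟨h, hh, hch⟩ := (hfin.injOn_iff_bijOn_of_mapsTo hmaps).1 hinj |>.2.2 hg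
    have : h = (w * φ)⁻¹ * g * (w * φ) := by
      simp only at hch
      rw [← hch]; group
    rwa [← this]
  -- fixed space is stable under w*φ
  have hFwφ : ∀ x, (∀ g ∈ W', g x = x) → ∀ g ∈ W', g ((w * φ) x) = (w * φ) x := by
    intro x hx g hg
    have key : g * (w * φ) = (w * φ) * ((w * φ)⁻¹ * g * (w * φ)) := by group
    calc g ((w * φ) x) = (g * (w * φ)) x := rfl
      _ = ((w * φ) * ((w * φ)⁻¹ * g * (w * φ))) x := by rw [key]
      _ = (w * φ) (((w * φ)⁻¹ * g * (w * φ)) x) := rfl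
      _ = (w * φ) x := by rw [hx _ (hconjinv g hg)]
  -- root lines generate X'; generators of X'
  have hrange : ∀ g ∈ W', ∀ x : X, g x - x ∈ X' := by
    intro g hg x
    rw [hX']
    have hsub := le_iSup₂ (f := fun (g : X ≃ₗ[ℂ] X) (_ : g ∈ W') =>
      LinearMap.range (((g : X ≃ₗ[ℂ] X) : X →ₗ[ℂ] X) - LinearMap.id)) g hg
    exact hsub ⟨x, by simp⟩
  -- X' is stable under w*φ
  have hX'wφ : ∀ x ∈ X', (w * φ) x ∈ X' := by
    have : X' ≤ Submodule.comap ((w * φ : X ≃ₗ[ℂ] X) : X →ₗ[ℂ] X) X' := by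
      conv_lhs => rw [hX']
      refine iSup₂_le fun g hg => ?_
      rintro y ⟨z, rfl⟩
      simp only [Submodule.mem_comap, LinearMap.sub_apply, LinearMap.id_apply,
        LinearEquiv.coe_coe, map_sub]
      have hcg : ((w * φ) * g * (w * φ)⁻¹) ((w * φ) z) = (w * φ) (g z) := by
        rw [← hmulapp]
        have : (w * φ) * g * (w * φ)⁻¹ * (w * φ) = (w * φ) * g := by group
        rw [this]; rfl
      have := hrange _ (hW'stab g hg) ((w * φ) z)
      rwa [hcg] at this
    exact fun x hx => this hx
  -- X' is stable under W'
  have hX'v : ∀ v ∈ W', ∀ x ∈ X', v x ∈ X' := by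
    intro v hv
    have : X' ≤ Submodule.comap ((v : X ≃ₗ[ℂ] X) : X →ₗ[ℂ] X) X' := by
      conv_lhs => rw [hX']
      refine iSup₂_le fun g hg => ?_
      rintro y ⟨z, rfl⟩
      simp only [Submodule.mem_comap, LinearMap.sub_apply, LinearMap.id_apply,
        LinearEquiv.coe_coe, map_sub]
      have h1' : v (g z) - z ∈ X' := by
        have := hrange _ (hmul v hv g hg) z
        rwa [hmulapp] at this
      have h2' : v z - z ∈ X' := hrange v hv z
      have := sub_mem h1' h2'
      simpa using this
    exact fun x hx => this hx
  -- fixed vectors in X' vanish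
  have hdisj : ∀ x, (∀ g ∈ W', g x = x) → x ∈ X' → x = 0 := by
    intro x hfix hX
    have := hpid x hfix
    rw [hpker x hX] at this
    exact this.symm
  -- cancellation of ζ-scalars on V
  have hVcancel : ∀ (v : X ≃ₗ[ℂ] X), ∀ y ∈ V, ζ • v y = ζ • y → v y = y := by
    intro v y hy h
    rcases eq_or_ne ζ 0 with h0 | h0
    · have hy' : (w * φ) y = ζ • y := by
        rw [hV] at hy
        simpa using Module.End.mem_eigenspace_iff.1 hy
      rw [h0, zero_smul] at hy'
      have : y = 0 := by
        have := (w * φ).injective (by simpa using hy')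
        simpa using this
      rw [this, map_zero]
    · exact smul_right_injective X h0 h
  -- eigenvector splitting
  have hsplit : ∀ v ∈ W', ∀ x,
      x ∈ Module.End.eigenspace ((v * (w * φ) : X ≃ₗ[ℂ] X) : X →ₗ[ℂ] X) ζ →
      (x - p x) ∈ Module.End.eigenspace ((v * (w * φ) : X ≃ₗ[ℂ] X) : X →ₗ[ℂ] X) ζ ⊓ X'
      ∧ (∀ g ∈ W', g (p x) = p x) := by
    intro v hv x hx
    have hx' : (v * (w * φ)) x = ζ • x := by
      simpa using Module.End.mem_eigenspace_iff.1 hx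
    have ha : ∀ g ∈ W', g (p x) = p x := fun g hg => hpfix x g hg
    have hb : x - p x ∈ X' := hpres x
    -- T(p x) is fixed by W'
    have hwφa : ∀ g ∈ W', g ((w * φ) (p x)) = (w * φ) (p x) := hFwφ (p x) ha
    have hTa : (v * (w * φ)) (p x) = (w * φ) (p x) := by
      rw [hmulapp]; exact hwφa v hv
    have hTb : (v * (w * φ)) (x - p x) ∈ X' := by
      rw [hmulapp]
      exact hX'v v hv _ (hX'wφ _ hb)
    -- the difference lies in F ∩ X'
    set z := (v * (w * φ)) (p x) - ζ • p x with hz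
    have hzX' : z ∈ X' := by
      have h4 : (v * (w * φ)) x = (v * (w * φ)) (p x) + (v * (w * φ)) (x - p x) := by
        rw [← map_add]; congr 1; abel
      have h5 : ζ • x = ζ • p x + ζ • (x - p x) := by rw [← smul_add]; congr 1; abel
      have h6 : z = ζ • (x - p x) - (v * (w * φ)) (x - p x) := by
        rw [hz]
        have := hx'
        rw [h4, h5] at this
        linear_combination (norm := abel) this
      rw [h6]
      exact sub_mem (Submodule.smul_mem _ _ hb) hTb
    have hzF : ∀ g ∈ W', g z = z := by
      intro g hg
      rw [hz, map_sub, map_smul, hTa, hwφa g hg, ha g hg]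
    have hz0 : z = 0 := hdisj z hzF hzX'
    have hb' : (v * (w * φ)) (x - p x) = ζ • (x - p x) := by
      have h6 : z = ζ • (x - p x) - (v * (w * φ)) (x - p x) := by
        rw [hz]
        have h4 : (v * (w * φ)) x = (v * (w * φ)) (p x) + (v * (w * φ)) (x - p x) := by
          rw [← map_add]; congr 1; abel
        have h5 : ζ • x = ζ • p x + ζ • (x - p x) := by rw [← smul_add]; congr 1; abel
        have := hx'
        rw [h4, h5] at this
        linear_combination (norm := abel) this
      rw [hz0] at h6
      exact (sub_eq_zero.mp h6.symm).symm
    refine ⟨Submodule.mem_inf.2 ⟨Module.End.mem_eigenspace_iff.2 (by simpa using hb'), hb⟩, ha⟩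
  constructor
  · -- (iv) → (ii) ∧ (iii)
    intro hiv
    have hii : {u : X ≃ₗ[ℂ] X | u ∈ W ∧ ∀ v ∈ V, u v = v} = W' := by
      refine Set.Subset.antisymm hW'sup (fun g hg => ⟨hsubW g hg, fun y hy => ?_⟩)
      have hy1 : y ∈ Module.End.eigenspace
          ((1 * (w * φ) : X ≃ₗ[ℂ] X) : X →ₗ[ℂ] X) ζ := by
        rw [one_mul, ← hV]; exact hy
      obtain ⟨hbmem, hafix⟩ := hsplit 1 h1 y hy1
      rw [hiv 1 h1] at hbmem
      have hyb : y = p y := by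
        have := (Submodule.mem_bot ℂ).1 hbmem
        linear_combination (norm := abel) this
      rw [hyb]
      exact hafix g hg
    refine ⟨hii, fun u hu hle => ?_⟩
    set v := u * w⁻¹ with hvdef
    have hvW : v ∈ W := W.mul_mem hu (W.inv_mem hw)
    have hvwφ : v * (w * φ) = u * φ := by rw [hvdef]; group
    have hvfix : ∀ y ∈ V, v y = y := by
      intro y hy
      have hy1 : (w * φ) y = ζ • y := by
        rw [hV] at hy; simpa using Module.End.mem_eigenspace_iff.1 hy
      have hy2 : (u * φ) y = ζ • y := by
        simpa using Module.End.mem_eigenspace_iff.1 (hle hy)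
      have : ζ • v y = ζ • y := by
        calc ζ • v y = v ((w * φ) y) := by rw [hy1, map_smul]
          _ = (v * (w * φ)) y := rfl
          _ = (u * φ) y := by rw [hvwφ]
          _ = ζ • y := hy2
      exact hVcancel v y hy this
    have hvW' : v ∈ W' := hW'sup ⟨hvW, hvfix⟩
    refine le_antisymm hle (fun x hx => ?_)
    have hx' : x ∈ Module.End.eigenspace
        ((v * (w * φ) : X ≃ₗ[ℂ] X) : X →ₗ[ℂ] X) ζ := by rwa [hvwφ]
    obtain ⟨hbmem, hafix⟩ := hsplit v hvW' x hx'
    rw [hiv v hvW'] at hbmem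
    have hxp : x = p x := by
      have := (Submodule.mem_bot ℂ).1 hbmem
      linear_combination (norm := abel) this
    have hxfix : ∀ g ∈ W', g x = x := by
      intro g hg; rw [hxp]; exact hafix g hg
    have hwφx : ∀ g ∈ W', g ((w * φ) x) = (w * φ) x := hFwφ x hxfix
    have hTx : (v * (w * φ)) x = ζ • x := by
      simpa using Module.End.mem_eigenspace_iff.1 hx'
    have : (w * φ) x = ζ • x := by
      rw [hmulapp] at hTx
      rw [← hwφx v hvW', hTx]
    rw [hV]
    exact Module.End.mem_eigenspace_iff.2 (by simpa using this)
  · -- (ii) ∧ (iii) → (iv)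
    rintro ⟨hii, hiii⟩ v hv
    set u := v * w with hudef
    have huW : u ∈ W := W.mul_mem (hsubW v hv) hw
    have huφ : u * φ = v * (w * φ) := by rw [hudef]; group
    have hvfixV : ∀ y ∈ V, v y = y := by
      intro y hy
      rw [← hii] at hv
      exact hv.2 y hy
    have hVle : V ≤ Module.End.eigenspace ((u * φ : X ≃ₗ[ℂ] X) : X →ₗ[ℂ] X) ζ := by
      intro y hy
      have hy1 : (w * φ) y = ζ • y := by
        rw [hV] at hy; simpa using Module.End.mem_eigenspace_iff.1 hy
      refine Module.End.mem_eigenspace_iff.2 ?_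
      have : (u * φ) y = ζ • y := by
        calc (u * φ) y = (v * (w * φ)) y := by rw [huφ]
          _ = v ((w * φ) y) := rfl
          _ = ζ • v y := by rw [hy1, map_smul]
          _ = ζ • y := by rw [hvfixV y hy]
      simpa using this
    have hVeq := hiii u huW hVle
    rw [huφ] at hVeq
    rw [← hVeq]
    refine (Submodule.eq_bot_iff _).2 (fun x hx => ?_)
    obtain ⟨hxV, hxX'⟩ := Submodule.mem_inf.1 hx
    refine hdisj x (fun g hg => ?_) hxX'
    rw [← hii] at hg
    exact hg.2 x hxV
end
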